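/- arXiv:1310.7212 — 10 statements merged into one kernel-verified Lean document; each statement's English description precedes it below -/
import Mathlib

section
/- Let U be a real interval, let f, g : U → ℝ be continuous and strictly monotone, and let α > 0. If |B_f(x,y,z) − B_g(x,y,z)| < 1 for all (x,y,z) ∈ U³ with |x − z| ≥ α, then for every n, every vector a ∈ Uⁿ and every weight vector w (with w_i > 0 and ∑ w_i = 1), one has |M_f(a,w) − M_g(a,w)| < α. -/
/-- **Theorem 1 (main result).** If `|B_f - B_g| < 1` on `Δ_α`, then the
quasi-arithmetic means satisfy `|M_f(a,w) - M_g(a,w)| < α`. -/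
theorem stmt_0 (U : Set ℝ) (hU : U.OrdConnected)
    (f g : ℝ → ℝ)
    (hfc : ContinuousOn f U) (hfm : StrictMonoOn f U ∨ StrictAntiOn f U)
    (hgc : ContinuousOn g U) (hgm : StrictMonoOn g U ∨ StrictAntiOn g U)
    (α : ℝ) (hα : 0 < α)
    (hB : ∀ x ∈ U, ∀ y ∈ U, ∀ z ∈ U, α ≤ |x - z| →
      |(f x - f y) / (f x - f z) - (g x - g y) / (g x - g z)| < 1)
    (n : ℕ) (a : Fin n → ℝ) (ha : ∀ i, a i ∈ U)
    (w : Fin n → ℝ) (hw : ∀ i, 0 < w i) (hw1 : ∑ i, w i = 1)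
    (Mf Mg : ℝ) (hMf : Mf ∈ U) (hMg : Mg ∈ U)
    (hMfe : f Mf = ∑ i, w i * f (a i))
    (hMge : g Mg = ∑ i, w i * g (a i)) :
    |Mf - Mg| < α := by
  by_contra hcon
  push_neg at hcon
  have hne : Mf ≠ Mg := by
    intro h
    rw [h, sub_self, abs_zero] at hcon
    linarith
  have hfne : f Mf ≠ f Mg := fun h =>
    hne (hfm.elim (fun hm => hm.injOn hMf hMg h) (fun hm => hm.injOn hMf hMg h))
  have hgne : g Mf ≠ g Mg := fun h =>
    hne (hgm.elim (fun hm => hm.injOn hMf hMg h) (fun hm => hm.injOn hMf hMg h))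
  have hD : f Mf - f Mg ≠ 0 := sub_ne_zero.mpr hfne
  have hE : g Mf - g Mg ≠ 0 := sub_ne_zero.mpr hgne
  have hn : (Finset.univ : Finset (Fin n)).Nonempty := by
    rcases (Finset.univ : Finset (Fin n)).eq_empty_or_nonempty with h | h
    · rw [h, Finset.sum_empty] at hw1; norm_num at hw1
    · exact h
  have h1 : ∑ i, (w i * f Mf - w i * f (a i)) = 0 := by
    rw [Finset.sum_sub_distrib, ← Finset.sum_mul, hw1, one_mul, ← hMfe, sub_self]
  have h2 : ∑ i, (w i * g Mf - w i * g (a i)) = g Mf - g Mg := by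
    rw [Finset.sum_sub_distrib, ← Finset.sum_mul, hw1, one_mul, ← hMge]
  have key : ∑ i, w i * ((f Mf - f (a i)) / (f Mf - f Mg)
      - (g Mf - g (a i)) / (g Mf - g Mg)) = -1 := by
    simp only [mul_sub, mul_div_assoc']
    rw [Finset.sum_sub_distrib, ← Finset.sum_div, ← Finset.sum_div, h1, h2,
      zero_div, div_self hE]
    ring
  have hlt : ∀ i : Fin n, w i * |(f Mf - f (a i)) / (f Mf - f Mg)
      - (g Mf - g (a i)) / (g Mf - g Mg)| < w i :=
    fun i => by
      have := hB Mf hMf (a i) (ha i) Mg hMg hcon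
      nlinarith [hw i]
  have habs : |∑ i, w i * ((f Mf - f (a i)) / (f Mf - f Mg)
      - (g Mf - g (a i)) / (g Mf - g Mg))|
      ≤ ∑ i, w i * |(f Mf - f (a i)) / (f Mf - f Mg)
      - (g Mf - g (a i)) / (g Mf - g Mg)| := by
    refine (Finset.abs_sum_le_sum_abs _ _).trans ?_
    refine Finset.sum_le_sum fun i _ => ?_
    rw [abs_mul, abs_of_pos (hw i)]
  have hsum : ∑ i, w i * |(f Mf - f (a i)) / (f Mf - f Mg)
      - (g Mf - g (a i)) / (g Mf - g Mg)| < 1 := by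
    rw [← hw1]
    exact Finset.sum_lt_sum_of_nonempty hn fun i _ => hlt i
  rw [key] at habs
  simp at habs
  linarith
end

section
/- Let U be a real interval, let f, g : U → ℝ be continuous and strictly monotone, and let α > 0. If |B_f(x,y,z) − B_g(x,y,z)| ≤ 1 for all (x,y,z) ∈ U³ with |x − z| ≥ α, then for every n, every vector a ∈ Uⁿ and every weight vector w (with w_i > 0 and ∑ w_i = 1), one has |M_f(a,w) − M_g(a,w)| ≤ α. -/
/-!
Suppose `α < |M_f - M_g|` and let `z` be the point between `M_f` and `M_g` at distance `α` from
`M_f`. Averaging `B_f(M_f, a_i, z)` with the weights `w_i` gives `B_f(M_f, M_f, z) = 0`, while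
averaging `B_g(M_f, a_i, z)` gives `B_g(M_f, M_g, z)`, whose absolute value exceeds `1` because `z`
lies strictly between `M_f` and `M_g`. So the average of `B_f - B_g` over `a` has absolute value
greater than `1`, although each of its terms has absolute value at most `1`.
-/

open Finset

noncomputable section

def palesOperator (f : ℝ → ℝ) (x y z : ℝ) : ℝ :=
  (f x - f y) / (f x - f z)

theorem sum_mul_palesOperator {ι : Type*} (s : Finset ι) (w : ι → ℝ) (hw1 : ∑ i ∈ s, w i = 1)
    (f : ℝ → ℝ) (a : ι → ℝ) {M : ℝ} (hM : f M = ∑ i ∈ s, w i * f (a i)) (x z : ℝ) :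
    ∑ i ∈ s, w i * palesOperator f x (a i) z = palesOperator f x M z := by
  simp only [palesOperator, mul_div_assoc', ← sum_div, mul_sub, sum_sub_distrib, ← sum_mul, hw1,
    one_mul, hM]

theorem sub_mul_sub_pos_of_strictMonoOn_or_strictAntiOn {g : ℝ → ℝ} {U : Set ℝ}
    (hg : StrictMonoOn g U ∨ StrictAntiOn g U) {x y z : ℝ} (hx : x ∈ U) (hy : y ∈ U) (hz : z ∈ U)
    (hxzy : 0 < (x - z) * (z - y)) : 0 < (g x - g z) * (g z - g y) := by
  rcases pos_and_pos_or_neg_and_neg_of_mul_pos hxzy with ⟨h₁, h₂⟩ | ⟨h₁, h₂⟩ <;>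
    rcases hg with hg | hg
  · exact mul_pos (sub_pos.2 (hg hz hx (sub_pos.1 h₁))) (sub_pos.2 (hg hy hz (sub_pos.1 h₂)))
  · exact mul_pos_of_neg_of_neg (sub_neg.2 (hg hz hx (sub_pos.1 h₁)))
      (sub_neg.2 (hg hy hz (sub_pos.1 h₂)))
  · exact mul_pos_of_neg_of_neg (sub_neg.2 (hg hx hz (sub_neg.1 h₁)))
      (sub_neg.2 (hg hz hy (sub_neg.1 h₂)))
  · exact mul_pos (sub_pos.2 (hg hx hz (sub_neg.1 h₁))) (sub_pos.2 (hg hz hy (sub_neg.1 h₂)))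

theorem one_lt_abs_palesOperator {g : ℝ → ℝ} {U : Set ℝ}
    (hg : StrictMonoOn g U ∨ StrictAntiOn g U) {x y z : ℝ} (hx : x ∈ U) (hy : y ∈ U) (hz : z ∈ U)
    (hxzy : 0 < (x - z) * (z - y)) : 1 < |palesOperator g x y z| := by
  have hpos := sub_mul_sub_pos_of_strictMonoOn_or_strictAntiOn hg hx hy hz hxzy
  have hxz : g x - g z ≠ 0 := left_ne_zero_of_mul hpos.ne'
  have hratio : 0 < (g z - g y) / (g x - g z) :=
    div_pos_iff.2 ((pos_and_pos_or_neg_and_neg_of_mul_pos hpos).imp And.symm And.symm)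
  have hsplit : palesOperator g x y z = 1 + (g z - g y) / (g x - g z) := by
    rw [palesOperator, one_add_div hxz]
    ring_nf
  rw [hsplit, abs_of_pos (by linarith)]
  linarith

theorem Set.OrdConnected.exists_abs_sub_eq_of_lt {U : Set ℝ} (hU : U.OrdConnected) {x y α : ℝ}
    (hx : x ∈ U) (hy : y ∈ U) (hα : 0 < α) (hαxy : α < |x - y|) :
    ∃ z ∈ U, |x - z| = α ∧ 0 < (x - z) * (z - y) := by
  have hxy : 0 < |x - y| := hα.trans hαxy
  set t := α / |x - y|
  have ht₀ : 0 < t := div_pos hα hxy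
  have ht₁ : t < 1 := (div_lt_one hxy).2 hαxy
  refine ⟨x + t • (y - x), hU.convex.add_smul_sub_mem hx hy ⟨ht₀.le, ht₁.le⟩, ?_, ?_⟩
  · rw [smul_eq_mul, show x - (x + t * (y - x)) = t * (x - y) by ring, abs_mul, abs_of_pos ht₀,
      div_mul_cancel₀ α hxy.ne']
  · rw [smul_eq_mul, show (x - (x + t * (y - x))) * (x + t * (y - x) - y)
      = t * (1 - t) * (x - y) ^ 2 by ring]
    exact mul_pos (mul_pos ht₀ (sub_pos.2 ht₁)) (sq_pos_of_ne_zero (abs_pos.1 hxy))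

theorem abs_sum_mul_le {ι : Type*} (s : Finset ι) {w b : ι → ℝ} {C : ℝ} (hw : ∀ i ∈ s, 0 ≤ w i)
    (hw1 : ∑ i ∈ s, w i = 1) (hb : ∀ i ∈ s, |b i| ≤ C) : |∑ i ∈ s, w i * b i| ≤ C :=
  calc |∑ i ∈ s, w i * b i|
      ≤ ∑ i ∈ s, w i * |b i| := by
        refine (abs_sum_le_sum_abs _ _).trans (sum_le_sum fun i hi => ?_)
        rw [abs_mul, abs_of_nonneg (hw i hi)]
    _ ≤ ∑ i ∈ s, w i * C := sum_le_sum fun i hi => mul_le_mul_of_nonneg_left (hb i hi) (hw i hi)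
    _ = C := by rw [← sum_mul, hw1, one_mul]

end

theorem stmt_1_general (U : Set ℝ) (hU : U.OrdConnected)
    (f g : ℝ → ℝ)
    (hgm : StrictMonoOn g U ∨ StrictAntiOn g U)
    (α : ℝ) (hα : 0 < α)
    (hB : ∀ x ∈ U, ∀ y ∈ U, ∀ z ∈ U, α ≤ |x - z| →
      |(f x - f y) / (f x - f z) - (g x - g y) / (g x - g z)| ≤ 1)
    (n : ℕ) (a : Fin n → ℝ) (ha : ∀ i, a i ∈ U)
    (w : Fin n → ℝ) (hw : ∀ i, 0 < w i) (hw1 : ∑ i, w i = 1)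
    (Mf Mg : ℝ) (hMf : Mf ∈ U) (hMg : Mg ∈ U)
    (hMfe : f Mf = ∑ i, w i * f (a i))
    (hMge : g Mg = ∑ i, w i * g (a i)) :
    |Mf - Mg| ≤ α := by
  by_contra! hfar
  obtain ⟨z, hz, hdist, hbetween⟩ := hU.exists_abs_sub_eq_of_lt hMf hMg hα hfar
  have hf : ∑ i, w i * palesOperator f Mf (a i) z = 0 := by
    rw [sum_mul_palesOperator _ w hw1 f a hMfe, palesOperator, sub_self, zero_div]
  have hg : 1 < |∑ i, w i * palesOperator g Mf (a i) z| := by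
    rw [sum_mul_palesOperator _ w hw1 g a hMge]
    exact one_lt_abs_palesOperator hgm hMf hMg hz hbetween
  have hdiff : |∑ i, w i * (palesOperator f Mf (a i) z - palesOperator g Mf (a i) z)| ≤ 1 :=
    abs_sum_mul_le _ (fun i _ => (hw i).le) hw1
      fun i _ => hB Mf hMf (a i) (ha i) z hz hdist.ge
  simp only [mul_sub, sum_sub_distrib, hf, zero_sub, abs_neg] at hdiff
  linarith

/-- **Corollary (non-strict version of the main result).** If `|B_f - B_g| ≤ 1` on `Δ_α`, then the
quasi-arithmetic means satisfy `|M_f(a,w) - M_g(a,w)| ≤ α`. -/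
theorem stmt_1 (U : Set ℝ) (hU : U.OrdConnected)
    (f g : ℝ → ℝ)
    (hfc : ContinuousOn f U) (hfm : StrictMonoOn f U ∨ StrictAntiOn f U)
    (hgc : ContinuousOn g U) (hgm : StrictMonoOn g U ∨ StrictAntiOn g U)
    (α : ℝ) (hα : 0 < α)
    (hB : ∀ x ∈ U, ∀ y ∈ U, ∀ z ∈ U, α ≤ |x - z| →
      |(f x - f y) / (f x - f z) - (g x - g y) / (g x - g z)| ≤ 1)
    (n : ℕ) (a : Fin n → ℝ) (ha : ∀ i, a i ∈ U)
    (w : Fin n → ℝ) (hw : ∀ i, 0 < w i) (hw1 : ∑ i, w i = 1)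
    (Mf Mg : ℝ) (hMf : Mf ∈ U) (hMg : Mg ∈ U)
    (hMfe : f Mf = ∑ i, w i * f (a i))
    (hMge : g Mg = ∑ i, w i * g (a i)) :
    |Mf - Mg| ≤ α :=
  stmt_1_general U hU f g hgm α hα hB n a ha w hw hw1 Mf Mg hMf hMg hMfe hMge
end

section
/- Let U be a compact real interval, let f and f_n (n ∈ ℕ) be continuous, strictly monotone real functions on U, and suppose that B_{f_n}(x,y,z) → B_f(x,y,z) as n → ∞ for every (x,y,z) ∈ U³ with x ≠ z. Then M_{f_n} → M_f uniformly with respect to a and w; that is, for every ε > 0 there exists N such that for all n > N, all m, all a ∈ Uᵐ and all weight vectors w, |M_{f_n}(a,w) − M_f(a,w)| < ε. -/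
/-!
Normalise at the endpoints: `g x := B_f(p, x, q) = (f p - f x) / (f p - f q)` is a continuous,
strictly increasing function with `g p = 0`, `g q = 1`, and since `g` is an affine image of `f`,
`g (M_f(a, w)) = ∑ wᵢ g(aᵢ)`. The hypothesis says exactly that the normalisations `gₙ` of `fₙ`
converge pointwise to `g`; being monotone with a continuous limit on a compact interval, they
converge uniformly (Pólya). Hence `g (M_{fₙ}) - g (M_f)` is uniformly small, and the uniform
continuity of `g⁻¹` turns this into uniform smallness of `M_{fₙ} - M_f`.
-/

open Filter Set Topology

theorem IsCompact.exists_pos_forall_dist_lt_of_injOn {α β : Type*} [PseudoMetricSpace α]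
    [MetricSpace β] {s : Set α} (hs : IsCompact s) {g : α → β} (hc : ContinuousOn g s)
    (hinj : InjOn g s) {ε : ℝ} (hε : 0 < ε) :
    ∃ δ > 0, ∀ u ∈ s, ∀ v ∈ s, dist (g u) (g v) < δ → dist u v < ε := by
  set K : Set (α × α) := s ×ˢ s ∩ {x | ε ≤ dist x.1 x.2}
  have hK : IsCompact K := (hs.prod hs).inter_right (isClosed_le continuous_const continuous_dist)
  have hφ : ContinuousOn (fun x : α × α => dist (g x.1) (g x.2)) K :=
    continuous_dist.comp_continuousOn <|
      (hc.comp continuousOn_fst fun x hx => hx.1.1).prodMk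
        (hc.comp continuousOn_snd fun x hx => hx.1.2)
  have hpos : ∀ x ∈ K, 0 < dist (g x.1) (g x.2) := by
    rintro ⟨u, v⟩ ⟨⟨hu, hv⟩, huv⟩
    refine dist_pos.2 fun heq => ?_
    have huv' : u = v := hinj hu hv heq
    exact (hε.trans_le huv).ne' (by rw [huv', dist_self])
  obtain ⟨δ, hδ, hδK⟩ := hK.exists_forall_le' hφ hpos
  refine ⟨δ, hδ, fun u hu v hv huv => ?_⟩
  by_contra! hfar
  exact (hδK (u, v) ⟨⟨hu, hv⟩, hfar⟩).not_gt huv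

theorem exists_finset_bracket_Icc (p q : ℝ) {η : ℝ} (hη : 0 < η) :
    ∃ T : Finset ℝ, ↑T ⊆ Icc p q ∧
      ∀ x ∈ Icc p q, ∃ t₁ ∈ T, ∃ t₂ ∈ T, t₁ ≤ x ∧ x ≤ t₂ ∧ t₂ - t₁ < η := by
  rcases lt_or_ge q p with hqp | hpq
  · exact ⟨∅, by simp, fun x hx => absurd (hx.1.trans hx.2) hqp.not_ge⟩
  set c := η / 2
  have hc : 0 < c := half_pos hη
  have hcη : c < η := half_lt_self hη
  set t : ℕ → ℝ := fun j => min (p + j * c) q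
  have ht : ∀ j, t j ∈ Icc p q := fun j =>
    ⟨le_min (by nlinarith [(j.cast_nonneg : (0 : ℝ) ≤ j)]) hpq, min_le_right _ _⟩
  set K := ⌈(q - p) / c⌉₊
  refine ⟨(Finset.range (K + 2)).image t, fun _ hy => by
    obtain ⟨j, -, rfl⟩ := Finset.mem_image.1 hy; exact ht j,
    fun x hx => ?_⟩
  set j := ⌊(x - p) / c⌋₊
  have hxc : 0 ≤ (x - p) / c := div_nonneg (sub_nonneg.2 hx.1) hc.le
  have hjK : j ≤ K :=
    (Nat.floor_le_ceil _).trans (Nat.ceil_mono (by gcongr; exact hx.2))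
  have hj_le : (j : ℝ) * c ≤ x - p := (le_div_iff₀ hc).1 (Nat.floor_le hxc)
  have hj_lt : x - p < ((j : ℝ) + 1) * c := (div_lt_iff₀ hc).1 (Nat.lt_floor_add_one _)
  refine ⟨t j, Finset.mem_image_of_mem t (Finset.mem_range.2 (by omega : j < K + 2)),
    t (j + 1), Finset.mem_image_of_mem t (Finset.mem_range.2 (by omega : j + 1 < K + 2)),
    ?_, ?_, ?_⟩
  · exact (min_le_left _ _).trans (by linarith)
  · exact le_min (by push_cast; linarith) hx.2
  · have : t (j + 1) ≤ t j + c := by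
      simp only [t]; push_cast
      rw [← min_add_add_right]
      exact min_le_min (by linarith) (by linarith)
    linarith

/-- Pólya's theorem. -/
theorem tendstoUniformlyOn_Icc_of_monotoneOn {ι : Type*} {l : Filter ι} {p q : ℝ}
    {F : ι → ℝ → ℝ} {f : ℝ → ℝ} (hF : ∀ i, MonotoneOn (F i) (Icc p q))
    (hf : ContinuousOn f (Icc p q)) (hlim : ∀ x ∈ Icc p q, Tendsto (fun i => F i x) l (𝓝 (f x))) :
    TendstoUniformlyOn F f l (Icc p q) := by
  rw [Metric.tendstoUniformlyOn_iff]
  intro ε hε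
  obtain ⟨η, hη, hf_uc⟩ := Metric.uniformContinuousOn_iff.1
    (isCompact_Icc.uniformContinuousOn_of_continuous hf) (ε / 2) (half_pos hε)
  obtain ⟨T, hT, hbracket⟩ := exists_finset_bracket_Icc p q hη
  have hT_lim : ∀ᶠ i in l, ∀ t ∈ T, dist (F i t) (f t) < ε / 2 :=
    (eventually_all_finset T).2 fun t ht => Metric.tendsto_nhds.1 (hlim t (hT ht)) _ (half_pos hε)
  filter_upwards [hT_lim] with i hi x hx
  obtain ⟨t₁, ht₁, t₂, ht₂, hx₁, hx₂, hgap⟩ := hbracket x hx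
  have hF₁ : F i t₁ ≤ F i x := hF i (hT ht₁) hx hx₁
  have hF₂ : F i x ≤ F i t₂ := hF i hx (hT ht₂) hx₂
  have hf₁ : dist (f x) (f t₁) < ε / 2 :=
    hf_uc _ hx _ (hT ht₁) (by rw [Real.dist_eq, abs_lt]; constructor <;> linarith)
  have hf₂ : dist (f x) (f t₂) < ε / 2 :=
    hf_uc _ hx _ (hT ht₂) (by rw [Real.dist_eq, abs_lt]; constructor <;> linarith)
  have hi₁ := hi t₁ ht₁
  have hi₂ := hi t₂ ht₂
  rw [Real.dist_eq, abs_lt] at hf₁ hf₂ hi₁ hi₂ ⊢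
  constructor <;> linarith

theorem strictMonoOn_div_sub_of_strictMonoOn_or_strictAntiOn {f : ℝ → ℝ} {s : Set ℝ} {p q : ℝ}
    (hp : p ∈ s) (hq : q ∈ s) (hpq : p < q) (hf : StrictMonoOn f s ∨ StrictAntiOn f s) :
    StrictMonoOn (fun x => (f p - f x) / (f p - f q)) s := by
  intro u hu v hv huv
  rcases hf with hf | hf
  · rw [div_lt_div_right_of_neg (sub_neg.2 (hf hp hq hpq))]
    linarith [hf hu hv huv]
  · rw [div_lt_div_iff_of_pos_right (sub_pos.2 (hf hp hq hpq))]
    linarith [hf hu hv huv]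

theorem Finset.sum_mul_sub_div_of_sum_eq_one {ι : Type*} {s : Finset ι} {w : ι → ℝ}
    (hw : ∑ i ∈ s, w i = 1) (y : ι → ℝ) (c d : ℝ) :
    ∑ i ∈ s, w i * ((c - y i) / d) = (c - ∑ i ∈ s, w i * y i) / d := by
  simp only [mul_div_assoc', ← Finset.sum_div, mul_sub, Finset.sum_sub_distrib, ← Finset.sum_mul,
    hw, one_mul]

theorem Finset.abs_sum_mul_sub_sum_mul_le {ι : Type*} {s : Finset ι} {w : ι → ℝ}
    (hw : ∀ i ∈ s, 0 ≤ w i) (hw1 : ∑ i ∈ s, w i = 1) {x y : ι → ℝ} {δ : ℝ}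
    (hxy : ∀ i ∈ s, |x i - y i| ≤ δ) :
    |∑ i ∈ s, w i * x i - ∑ i ∈ s, w i * y i| ≤ δ :=
  calc |∑ i ∈ s, w i * x i - ∑ i ∈ s, w i * y i|
      = |∑ i ∈ s, w i * (x i - y i)| := by simp only [mul_sub, Finset.sum_sub_distrib]
    _ ≤ ∑ i ∈ s, |w i * (x i - y i)| := Finset.abs_sum_le_sum_abs _ _
    _ ≤ ∑ i ∈ s, w i * δ := Finset.sum_le_sum fun i hi => by
        rw [abs_mul, abs_of_nonneg (hw i hi)]
        exact mul_le_mul_of_nonneg_left (hxy i hi) (hw i hi)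
    _ = δ := by rw [← Finset.sum_mul, hw1, one_mul]

theorem stmt_3_general (p q : ℝ)
    (f : ℝ → ℝ) (F : ℕ → ℝ → ℝ)
    (hfc : ContinuousOn f (Set.Icc p q))
    (hfm : StrictMonoOn f (Set.Icc p q) ∨ StrictAntiOn f (Set.Icc p q))
    (hFm : ∀ n, StrictMonoOn (F n) (Set.Icc p q) ∨ StrictAntiOn (F n) (Set.Icc p q))
    (hB : ∀ x ∈ Set.Icc p q, ∀ y ∈ Set.Icc p q, ∀ z ∈ Set.Icc p q, x ≠ z →
      Filter.Tendsto (fun n => (F n x - F n y) / (F n x - F n z)) Filter.atTop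
        (nhds ((f x - f y) / (f x - f z)))) :
    ∀ ε > (0 : ℝ), ∃ N : ℕ, ∀ n > N, ∀ (m : ℕ) (a : Fin m → ℝ), (∀ i, a i ∈ Set.Icc p q) →
      ∀ w : Fin m → ℝ, (∀ i, 0 < w i) → (∑ i, w i) = 1 →
      ∀ Mf ∈ Set.Icc p q, f Mf = ∑ i, w i * f (a i) →
      ∀ MF ∈ Set.Icc p q, F n MF = ∑ i, w i * F n (a i) →
      |MF - Mf| < ε := by
  intro ε hε
  rcases le_or_gt q p with hqp | hpq
  · refine ⟨0, fun n _ m a _ w _ _ Mf hMf _ MF hMF _ => ?_⟩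
    rw [show MF = Mf by linarith [hMf.1, hMf.2, hMF.1, hMF.2], sub_self, abs_zero]
    exact hε
  have hp : p ∈ Icc p q := left_mem_Icc.2 hpq.le
  have hq : q ∈ Icc p q := right_mem_Icc.2 hpq.le
  set g : ℝ → ℝ := fun x => (f p - f x) / (f p - f q)
  set G : ℕ → ℝ → ℝ := fun n x => (F n p - F n x) / (F n p - F n q)
  have hg_mono := strictMonoOn_div_sub_of_strictMonoOn_or_strictAntiOn hp hq hpq hfm
  have hg_cont : ContinuousOn g (Icc p q) := (continuousOn_const.sub hfc).div_const _
  obtain ⟨δ, hδ, hg_inv⟩ :=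
    isCompact_Icc.exists_pos_forall_dist_lt_of_injOn hg_cont hg_mono.injOn hε
  have hG_unif : TendstoUniformlyOn G g atTop (Icc p q) :=
    tendstoUniformlyOn_Icc_of_monotoneOn
      (fun n => (strictMonoOn_div_sub_of_strictMonoOn_or_strictAntiOn hp hq hpq (hFm n)).monotoneOn)
      hg_cont fun x hx => hB p hp x hx q hq hpq.ne
  obtain ⟨N, hN⟩ := eventually_atTop.1 (Metric.tendstoUniformlyOn_iff.1 hG_unif _ (half_pos hδ))
  refine ⟨N, fun n hn m a ha w hw hw1 Mf hMf hfMf MF hMF hFMF => ?_⟩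
  have hg_mean : g Mf = ∑ i, w i * g (a i) := by
    simp only [g, Finset.sum_mul_sub_div_of_sum_eq_one hw1, hfMf]
  have hG_mean : G n MF = ∑ i, w i * G n (a i) := by
    simp only [G, Finset.sum_mul_sub_div_of_sum_eq_one hw1, hFMF]
  have hmeans : |G n MF - g Mf| ≤ δ / 2 := by
    rw [hG_mean, hg_mean]
    refine Finset.abs_sum_mul_sub_sum_mul_le (fun i _ => (hw i).le) hw1 fun i _ => ?_
    rw [abs_sub_comm, ← Real.dist_eq]
    exact (hN n hn.le (a i) (ha i)).le
  have hMF_close : |g MF - G n MF| < δ / 2 := by rw [← Real.dist_eq]; exact hN n hn.le MF hMF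
  rw [← Real.dist_eq]
  refine hg_inv MF hMF Mf hMf ?_
  rw [Real.dist_eq]
  linarith [abs_sub_le (g MF) (G n MF) (g Mf)]

/-- **Corollary (uniform convergence on a compact interval).** If `U` is compact and
`B_{f_n} → B_f` pointwise on `Δ`, then `M_{f_n} → M_f` uniformly with respect to `a` and `w`. -/
theorem stmt_3 (p q : ℝ) (hpq : p ≤ q)
    (f : ℝ → ℝ) (F : ℕ → ℝ → ℝ)
    (hfc : ContinuousOn f (Set.Icc p q))
    (hfm : StrictMonoOn f (Set.Icc p q) ∨ StrictAntiOn f (Set.Icc p q))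
    (hFc : ∀ n, ContinuousOn (F n) (Set.Icc p q))
    (hFm : ∀ n, StrictMonoOn (F n) (Set.Icc p q) ∨ StrictAntiOn (F n) (Set.Icc p q))
    (hB : ∀ x ∈ Set.Icc p q, ∀ y ∈ Set.Icc p q, ∀ z ∈ Set.Icc p q, x ≠ z →
      Filter.Tendsto (fun n => (F n x - F n y) / (F n x - F n z)) Filter.atTop
        (nhds ((f x - f y) / (f x - f z)))) :
    ∀ ε > (0 : ℝ), ∃ N : ℕ, ∀ n > N, ∀ (m : ℕ) (a : Fin m → ℝ), (∀ i, a i ∈ Set.Icc p q) →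
      ∀ w : Fin m → ℝ, (∀ i, 0 < w i) → (∑ i, w i) = 1 →
      ∀ Mf ∈ Set.Icc p q, f Mf = ∑ i, w i * f (a i) →
      ∀ MF ∈ Set.Icc p q, F n MF = ∑ i, w i * F n (a i) →
      |MF - Mf| < ε :=
  stmt_3_general p q f F hfc hfm hFm hB
end

section
/- Let U be a closed, bounded real interval with length |U|, and let f, g : U → ℝ be C² functions with nowhere vanishing first derivatives. Then for every n, every a ∈ Uⁿ and every weight vector w (with w_i > 0, ∑ w_i = 1), |M_f(a,w) − M_g(a,w)| ≤ |U| · exp(‖A_f‖_*) · (exp(‖A_f − A_g‖_*) − 1). -/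
/-- The oscillation norm `‖h‖_* := sup_{a,b ∈ U} |∫_a^b h(x) dx|`. -/
noncomputable def oscNorm (U : Set ℝ) (h : ℝ → ℝ) : ℝ :=
  ⨆ p : U × U, |∫ x in (p.1 : ℝ)..(p.2 : ℝ), h x|

open Set intervalIntegral in
/-- Sign dichotomy for a continuous nonvanishing function on an interval. -/
lemma aux_sign {p q : ℝ} {h : ℝ → ℝ} (hc : ContinuousOn h (Set.Icc p q))
    (h0 : ∀ x ∈ Set.Icc p q, h x ≠ 0) :
    (∀ x ∈ Set.Icc p q, 0 < h x) ∨ (∀ x ∈ Set.Icc p q, h x < 0) := by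
  by_contra hcon
  push_neg at hcon
  obtain ⟨⟨x₁, hx₁, hx₁'⟩, ⟨x₂, hx₂, hx₂'⟩⟩ := hcon
  have h1 : h x₁ < 0 := lt_of_le_of_ne hx₁' (h0 x₁ hx₁)
  have h2 : 0 < h x₂ := lt_of_le_of_ne hx₂' (Ne.symm (h0 x₂ hx₂))
  have hsub : Set.uIcc x₁ x₂ ⊆ Set.Icc p q := Set.uIcc_subset_Icc hx₁ hx₂
  have := intermediate_value_uIcc (hc.mono hsub)
  have h0' : (0 : ℝ) ∈ Set.uIcc (h x₁) (h x₂) :=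
    Set.mem_uIcc.2 (Or.inl ⟨le_of_lt h1, le_of_lt h2⟩)
  obtain ⟨x, hx, hfx⟩ := this h0'
  exact h0 x (hsub hx) hfx

open Set intervalIntegral in
/-- FTC on a subinterval of `[p,q]` with derivatives within `[p,q]`. -/
lemma aux_ftc {p q : ℝ} {F G : ℝ → ℝ}
    (hF : ∀ x ∈ Set.Icc p q, HasDerivWithinAt F (G x) (Set.Icc p q) x)
    (hGc : ContinuousOn G (Set.Icc p q))
    {u v : ℝ} (hu : u ∈ Set.Icc p q) (hv : v ∈ Set.Icc p q) :
    ∫ x in u..v, G x = F v - F u := by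
  have hsub : Set.uIcc u v ⊆ Set.Icc p q := Set.uIcc_subset_Icc hu hv
  have hFc0 : ContinuousOn F (Set.Icc p q) := fun x hx => (hF x hx).continuousWithinAt
  have hFc : ContinuousOn F (Set.uIcc u v) := hFc0.mono hsub
  apply integral_eq_sub_of_hasDeriv_right hFc
  · intro x hx
    have hx' : x ∈ Set.Ioo p q := by
      constructor
      · exact lt_of_le_of_lt (le_min hu.1 hv.1) hx.1
      · exact lt_of_lt_of_le hx.2 (max_le hu.2 hv.2)
    have hmem : Set.Icc p q ∈ nhds x := Icc_mem_nhds hx'.1 hx'.2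
    have hxI : x ∈ Set.Icc p q := Set.Ioo_subset_Icc_self hx'
    exact ((hF x hxI).hasDerivAt hmem).hasDerivWithinAt
  · exact (hGc.mono hsub).intervalIntegrable

open Set intervalIntegral in
/-- Integral of h over a subinterval is bounded by the oscillation norm. -/
lemma aux_osc {p q : ℝ} (hpq : p ≤ q) {h : ℝ → ℝ} (hc : ContinuousOn h (Set.Icc p q))
    {u v : ℝ} (hu : u ∈ Set.Icc p q) (hv : v ∈ Set.Icc p q) :
    |∫ x in u..v, h x| ≤ oscNorm (Set.Icc p q) h := by
  haveI : Nonempty (Set.Icc p q) := ⟨⟨p, le_refl p, hpq⟩⟩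
  obtain ⟨C, hC⟩ := (isCompact_Icc (a := p) (b := q)).exists_bound_of_continuousOn hc
  have hb : BddAbove (Set.range fun pr : (Set.Icc p q) × (Set.Icc p q) =>
      |∫ x in (pr.1 : ℝ)..(pr.2 : ℝ), h x|) := by
    refine ⟨C * (q - p), ?_⟩
    rintro _ ⟨pr, rfl⟩
    have hC0 : 0 ≤ C := le_trans (norm_nonneg _) (hC p ⟨le_refl p, hpq⟩)
    have hIsub : Set.uIoc (pr.1 : ℝ) (pr.2 : ℝ) ⊆ Set.Icc p q := by
      refine subset_trans Set.uIoc_subset_uIcc (Set.uIcc_subset_Icc pr.1.2 pr.2.2)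
    have h1 : ‖∫ x in (pr.1 : ℝ)..(pr.2 : ℝ), h x‖ ≤ C * |(pr.2 : ℝ) - (pr.1 : ℝ)| :=
      intervalIntegral.norm_integral_le_of_norm_le_const (fun x hx => hC x (hIsub hx))
    have h2 : |(pr.2 : ℝ) - (pr.1 : ℝ)| ≤ q - p := by
      have := pr.1.2; have := pr.2.2
      rw [abs_sub_le_iff]
      constructor <;> [skip; skip] <;>
        · obtain ⟨h1', h2'⟩ := pr.1.2; obtain ⟨h3', h4'⟩ := pr.2.2; linarith
    calc |∫ x in (pr.1 : ℝ)..(pr.2 : ℝ), h x| ≤ C * |(pr.2 : ℝ) - (pr.1 : ℝ)| := h1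
      _ ≤ C * (q - p) := by apply mul_le_mul_of_nonneg_left h2 hC0
  exact le_ciSup hb (⟨⟨u, hu⟩, ⟨v, hv⟩⟩ : (Set.Icc p q) × (Set.Icc p q))

open Set intervalIntegral in
lemma aux_osc_nonneg {p q : ℝ} (hpq : p ≤ q) {h : ℝ → ℝ}
    (hc : ContinuousOn h (Set.Icc p q)) : 0 ≤ oscNorm (Set.Icc p q) h := by
  have hp : p ∈ Set.Icc p q := ⟨le_refl p, hpq⟩
  have := aux_osc hpq hc hp hp
  rwa [intervalIntegral.integral_same, abs_zero] at this

open Set intervalIntegral in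
/-- Key exponential formula: `F' v = F' u * exp(∫_u^v F''/F')`. -/
lemma aux_exp {p q : ℝ} {F' F'' : ℝ → ℝ}
    (hF'' : ∀ x ∈ Set.Icc p q, HasDerivWithinAt F' (F'' x) (Set.Icc p q) x)
    (hF''c : ContinuousOn F'' (Set.Icc p q))
    (hpos : ∀ x ∈ Set.Icc p q, 0 < F' x)
    {u v : ℝ} (hu : u ∈ Set.Icc p q) (hv : v ∈ Set.Icc p q) :
    F' v = F' u * Real.exp (∫ x in u..v, F'' x / F' x) := by
  have hF'c : ContinuousOn F' (Set.Icc p q) := fun x hx => (hF'' x hx).continuousWithinAt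
  have hne : ∀ x ∈ Set.Icc p q, F' x ≠ 0 := fun x hx => (hpos x hx).ne'
  have hL : ∀ x ∈ Set.Icc p q,
      HasDerivWithinAt (fun y => Real.log (F' y)) (F'' x / F' x) (Set.Icc p q) x :=
    fun x hx => (hF'' x hx).log (hne x hx)
  have hLc : ContinuousOn (fun x => F'' x / F' x) (Set.Icc p q) :=
    hF''c.div hF'c hne
  have key := aux_ftc hL hLc hu hv
  rw [key, Real.exp_sub, Real.exp_log (hpos v hv), Real.exp_log (hpos u hu)]
  field_simp [(hpos u hu).ne']

open Set intervalIntegral in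
/-- The main estimate, assuming both derivatives positive. -/
lemma aux_main (p q : ℝ) (hpq : p ≤ q)
    (f f' f'' g g' g'' : ℝ → ℝ)
    (hf' : ∀ x ∈ Set.Icc p q, HasDerivWithinAt f (f' x) (Set.Icc p q) x)
    (hf'' : ∀ x ∈ Set.Icc p q, HasDerivWithinAt f' (f'' x) (Set.Icc p q) x)
    (hf''c : ContinuousOn f'' (Set.Icc p q))
    (hfpos : ∀ x ∈ Set.Icc p q, 0 < f' x)
    (hg' : ∀ x ∈ Set.Icc p q, HasDerivWithinAt g (g' x) (Set.Icc p q) x)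
    (hg'' : ∀ x ∈ Set.Icc p q, HasDerivWithinAt g' (g'' x) (Set.Icc p q) x)
    (hg''c : ContinuousOn g'' (Set.Icc p q))
    (hgpos : ∀ x ∈ Set.Icc p q, 0 < g' x)
    (n : ℕ) (a : Fin n → ℝ) (ha : ∀ i, a i ∈ Set.Icc p q)
    (w : Fin n → ℝ) (hw : ∀ i, 0 < w i) (hw1 : ∑ i, w i = 1)
    (Mf Mg : ℝ) (hMf : Mf ∈ Set.Icc p q) (hMg : Mg ∈ Set.Icc p q)
    (hMfe : f Mf = ∑ i, w i * f (a i))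
    (hMge : g Mg = ∑ i, w i * g (a i)) :
    |Mf - Mg| ≤ (q - p) * Real.exp (oscNorm (Set.Icc p q) (fun x => f'' x / f' x)) *
      (Real.exp (oscNorm (Set.Icc p q) (fun x => f'' x / f' x - g'' x / g' x)) - 1) := by
  set U := Set.Icc p q with hU
  have hf'c : ContinuousOn f' U := fun x hx => (hf'' x hx).continuousWithinAt
  have hg'c : ContinuousOn g' U := fun x hx => (hg'' x hx).continuousWithinAt
  have hfne : ∀ x ∈ U, f' x ≠ 0 := fun x hx => (hfpos x hx).ne'
  have hgne : ∀ x ∈ U, g' x ≠ 0 := fun x hx => (hgpos x hx).ne'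
  have hAfc : ContinuousOn (fun x => f'' x / f' x) U := hf''c.div hf'c hfne
  have hAgc : ContinuousOn (fun x => g'' x / g' x) U := hg''c.div hg'c hgne
  have hDc : ContinuousOn (fun x => f'' x / f' x - g'' x / g' x) U := hAfc.sub hAgc
  set Nf := oscNorm U (fun x => f'' x / f' x) with hNf
  set δ := oscNorm U (fun x => f'' x / f' x - g'' x / g' x) with hδ
  have hδ0 : 0 ≤ δ := aux_osc_nonneg hpq hDc
  have hNf0 : 0 ≤ Nf := aux_osc_nonneg hpq hAfc
  -- the minimum of f'
  obtain ⟨xm, hxm, hmin⟩ := isCompact_Icc.exists_isMinOn (Set.nonempty_Icc.2 hpq) hf'c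
  set m := f' xm with hm
  have hm0 : 0 < m := hfpos xm hxm
  have hminle : ∀ x ∈ U, m ≤ f' x := fun x hx => hmin hx
  -- upper bound for f'
  have hub : ∀ x ∈ U, f' x ≤ m * Real.exp Nf := by
    intro x hx
    have h1 := aux_exp hf'' hf''c hfpos hxm hx
    have h2 : |∫ t in xm..x, f'' t / f' t| ≤ Nf := aux_osc hpq hAfc hxm hx
    have h3 : ∫ t in xm..x, f'' t / f' t ≤ Nf := le_trans (le_abs_self _) h2
    rw [h1]
    exact mul_le_mul_of_nonneg_left (Real.exp_le_exp.2 h3) (le_of_lt hm0)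
  -- the comparison constant
  set c := f' Mg / g' Mg with hc
  -- pointwise bound
  have hpt : ∀ x ∈ U, |f' x - c * g' x| ≤ (Real.exp δ - 1) * (m * Real.exp Nf) := by
    intro x hx
    have h1 := aux_exp hf'' hf''c hfpos hx hMg
    have h2 := aux_exp hg'' hg''c hgpos hx hMg
    have hintf : IntervalIntegrable (fun t => f'' t / f' t) MeasureTheory.volume x Mg :=
      (hAfc.mono (Set.uIcc_subset_Icc hx hMg)).intervalIntegrable
    have hintg : IntervalIntegrable (fun t => g'' t / g' t) MeasureTheory.volume x Mg :=
      (hAgc.mono (Set.uIcc_subset_Icc hx hMg)).intervalIntegrable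
    set s := ∫ t in x..Mg, (f'' t / f' t - g'' t / g' t) with hs
    have hsub : s = (∫ t in x..Mg, f'' t / f' t) - ∫ t in x..Mg, g'' t / g' t :=
      intervalIntegral.integral_sub hintf hintg
    have hcg : c * g' x = f' x * Real.exp s := by
      rw [hc, h1, h2, hsub, Real.exp_sub]
      have e1 : g' x ≠ 0 := hgne x hx
      have e2 : Real.exp (∫ t in x..Mg, g'' t / g' t) ≠ 0 := (Real.exp_pos _).ne'
      field_simp
    have hsb : |s| ≤ δ := aux_osc hpq hDc hx hMg
    have hes1 : Real.exp s ≤ Real.exp δ := Real.exp_le_exp.2 (le_trans (le_abs_self _) hsb)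
    have hes2 : Real.exp (-δ) ≤ Real.exp s := by
      apply Real.exp_le_exp.2
      have := neg_abs_le s
      linarith [le_trans (le_abs_self _) hsb, (abs_le.1 hsb).1]
    have hfpx : 0 < f' x := hfpos x hx
    have hexpd : Real.exp (-δ) + Real.exp δ ≥ 2 := by
      have h := Real.add_one_le_exp δ
      have h' := Real.add_one_le_exp (-δ)
      nlinarith [Real.exp_pos δ, Real.exp_pos (-δ), sq_nonneg (Real.exp δ - 1),
        Real.exp_neg δ]
    have habs : |1 - Real.exp s| ≤ Real.exp δ - 1 := by
      rw [abs_le]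
      constructor <;> nlinarith
    have hrw : f' x - c * g' x = f' x * (1 - Real.exp s) := by rw [hcg]; ring
    have hexpδ1 : 1 ≤ Real.exp δ := by
      rw [← Real.exp_zero]; exact Real.exp_le_exp.2 hδ0
    calc |f' x - c * g' x| = f' x * |1 - Real.exp s| := by
          rw [hrw, abs_mul, abs_of_pos hfpx]
      _ ≤ f' x * (Real.exp δ - 1) := mul_le_mul_of_nonneg_left habs (le_of_lt hfpx)
      _ ≤ (m * Real.exp Nf) * (Real.exp δ - 1) := by
          apply mul_le_mul_of_nonneg_right (hub x hx); linarith
      _ = (Real.exp δ - 1) * (m * Real.exp Nf) := by ring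
  -- identity
  have hftc : ∀ i, ∫ x in Mg..(a i), (f' x - c * g' x) =
      (f (a i) - f Mg) - c * (g (a i) - g Mg) := by
    intro i
    have hintf : IntervalIntegrable f' MeasureTheory.volume Mg (a i) :=
      (hf'c.mono (Set.uIcc_subset_Icc hMg (ha i))).intervalIntegrable
    have hintg : IntervalIntegrable g' MeasureTheory.volume Mg (a i) :=
      (hg'c.mono (Set.uIcc_subset_Icc hMg (ha i))).intervalIntegrable
    rw [intervalIntegral.integral_sub hintf (hintg.const_mul c),
      intervalIntegral.integral_const_mul,
      aux_ftc hf' hf'c hMg (ha i), aux_ftc hg' hg'c hMg (ha i)]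
  have hiden : f Mf - f Mg = ∑ i, w i * ∫ x in Mg..(a i), (f' x - c * g' x) := by
    have h1 : ∀ i ∈ Finset.univ, w i * (∫ x in Mg..(a i), (f' x - c * g' x)) =
        w i * f (a i) - w i * f Mg - c * (w i * g (a i) - w i * g Mg) := by
      intro i _; rw [hftc i]; ring
    rw [Finset.sum_congr rfl h1]
    have e1 : ∑ i, (w i * f (a i) - w i * f Mg - c * (w i * g (a i) - w i * g Mg)) =
        (∑ i, w i * f (a i)) - (∑ i, w i) * f Mg -
          c * ((∑ i, w i * g (a i)) - (∑ i, w i) * g Mg) := by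
      rw [Finset.sum_sub_distrib, Finset.sum_sub_distrib, ← Finset.mul_sum,
        Finset.sum_sub_distrib, Finset.sum_mul, Finset.sum_mul]
    rw [e1, hw1, ← hMfe, ← hMge]
    ring
  -- bound on the f-difference
  have hKnn : 0 ≤ (Real.exp δ - 1) * (m * Real.exp Nf) := by
    have h1 : 1 ≤ Real.exp δ := by
      rw [← Real.exp_zero]; exact Real.exp_le_exp.2 hδ0
    exact mul_nonneg (by linarith) (le_of_lt (mul_pos hm0 (Real.exp_pos Nf)))
  have hbd : |f Mf - f Mg| ≤ (Real.exp δ - 1) * (m * Real.exp Nf) * (q - p) := by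
    rw [hiden]
    calc |∑ i, w i * ∫ x in Mg..(a i), (f' x - c * g' x)|
        ≤ ∑ i, |w i * ∫ x in Mg..(a i), (f' x - c * g' x)| :=
          Finset.abs_sum_le_sum_abs _ _
      _ ≤ ∑ i, w i * ((Real.exp δ - 1) * (m * Real.exp Nf) * (q - p)) := by
          apply Finset.sum_le_sum
          intro i _
          rw [abs_mul, abs_of_pos (hw i)]
          apply mul_le_mul_of_nonneg_left _ (le_of_lt (hw i))
          have hIsub : Set.uIoc Mg (a i) ⊆ U :=
            subset_trans Set.uIoc_subset_uIcc (Set.uIcc_subset_Icc hMg (ha i))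
          have h1 : ‖∫ x in Mg..(a i), (f' x - c * g' x)‖ ≤
              (Real.exp δ - 1) * (m * Real.exp Nf) * |a i - Mg| :=
            intervalIntegral.norm_integral_le_of_norm_le_const
              (fun x hx => hpt x (hIsub hx))
          have h2 : |a i - Mg| ≤ q - p := by
            obtain ⟨u1, u2⟩ := ha i; obtain ⟨v1, v2⟩ := hMg
            rw [abs_sub_le_iff]; constructor <;> linarith
          calc |∫ x in Mg..(a i), (f' x - c * g' x)|
              ≤ (Real.exp δ - 1) * (m * Real.exp Nf) * |a i - Mg| := h1
            _ ≤ (Real.exp δ - 1) * (m * Real.exp Nf) * (q - p) :=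
                mul_le_mul_of_nonneg_left h2 hKnn
      _ = (Real.exp δ - 1) * (m * Real.exp Nf) * (q - p) := by
          rw [← Finset.sum_mul, hw1, one_mul]
  -- lower bound
  have hlow : m * |Mf - Mg| ≤ |f Mf - f Mg| := by
    have hcm : ∀ u v : ℝ, u ∈ U → v ∈ U → u ≤ v → m * (v - u) ≤ f v - f u := by
      intro u v hu hv huv
      have h1 : ∫ x in u..v, f' x = f v - f u := aux_ftc hf' hf'c hu hv
      have h2 : ∫ x in u..v, (fun _ => m) x = m * (v - u) := by
        simp [intervalIntegral.integral_const]; ring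
      rw [← h1, ← h2]
      apply intervalIntegral.integral_mono_on huv intervalIntegrable_const
        ((hf'c.mono (Set.uIcc_subset_Icc hu hv)).intervalIntegrable)
      intro x hx
      exact hminle x (Set.Icc_subset_Icc hu.1 hv.2 hx)
    rcases le_total Mg Mf with hle | hle
    · have := hcm Mg Mf hMg hMf hle
      rw [abs_of_nonneg (by linarith : (0:ℝ) ≤ Mf - Mg)]
      calc m * (Mf - Mg) ≤ f Mf - f Mg := this
        _ ≤ |f Mf - f Mg| := le_abs_self _
    · have := hcm Mf Mg hMf hMg hle
      rw [abs_of_nonpos (by linarith : Mf - Mg ≤ 0)]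
      calc m * -(Mf - Mg) = m * (Mg - Mf) := by ring
        _ ≤ f Mg - f Mf := this
        _ ≤ |f Mf - f Mg| := by rw [abs_sub_comm]; exact le_abs_self _
  -- conclude
  have hfinal : m * |Mf - Mg| ≤ m * ((q - p) * Real.exp Nf * (Real.exp δ - 1)) := by
    calc m * |Mf - Mg| ≤ |f Mf - f Mg| := hlow
      _ ≤ (Real.exp δ - 1) * (m * Real.exp Nf) * (q - p) := hbd
      _ = m * ((q - p) * Real.exp Nf * (Real.exp δ - 1)) := by ring
  exact le_of_mul_le_mul_left hfinal hm0

/-- **Theorem 2.** For `f, g` of class `C²` on a closed bounded interval `U = [p,q]` with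
nowhere vanishing first derivatives,
`ρ(M_f, M_g) ≤ |U| · exp(‖A_f‖_*) · (exp(‖A_f - A_g‖_*) - 1)` where `A_f = f''/f'`. -/
theorem stmt_5 (p q : ℝ) (hpq : p ≤ q)
    (f f' f'' g g' g'' : ℝ → ℝ)
    (hf' : ∀ x ∈ Set.Icc p q, HasDerivWithinAt f (f' x) (Set.Icc p q) x)
    (hf'' : ∀ x ∈ Set.Icc p q, HasDerivWithinAt f' (f'' x) (Set.Icc p q) x)
    (hf''c : ContinuousOn f'' (Set.Icc p q))
    (hf'0 : ∀ x ∈ Set.Icc p q, f' x ≠ 0)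
    (hg' : ∀ x ∈ Set.Icc p q, HasDerivWithinAt g (g' x) (Set.Icc p q) x)
    (hg'' : ∀ x ∈ Set.Icc p q, HasDerivWithinAt g' (g'' x) (Set.Icc p q) x)
    (hg''c : ContinuousOn g'' (Set.Icc p q))
    (hg'0 : ∀ x ∈ Set.Icc p q, g' x ≠ 0)
    (n : ℕ) (a : Fin n → ℝ) (ha : ∀ i, a i ∈ Set.Icc p q)
    (w : Fin n → ℝ) (hw : ∀ i, 0 < w i) (hw1 : ∑ i, w i = 1)
    (Mf Mg : ℝ) (hMf : Mf ∈ Set.Icc p q) (hMg : Mg ∈ Set.Icc p q)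
    (hMfe : f Mf = ∑ i, w i * f (a i))
    (hMge : g Mg = ∑ i, w i * g (a i)) :
    |Mf - Mg| ≤ (q - p) * Real.exp (oscNorm (Set.Icc p q) (fun x => f'' x / f' x)) *
      (Real.exp (oscNorm (Set.Icc p q) (fun x => f'' x / f' x - g'' x / g' x)) - 1) := by
  have hf'c : ContinuousOn f' (Set.Icc p q) := fun x hx => (hf'' x hx).continuousWithinAt
  have hg'c : ContinuousOn g' (Set.Icc p q) := fun x hx => (hg'' x hx).continuousWithinAt
  have hoscf : ∀ F' F'' : ℝ → ℝ, oscNorm (Set.Icc p q) (fun x => (-F'' x) / (-F' x)) =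
      oscNorm (Set.Icc p q) (fun x => F'' x / F' x) := by
    intro F' F''
    congr 1
    funext x
    rw [neg_div_neg_eq]
  have hneg : ∀ (F : ℝ → ℝ) (M : ℝ), F M = ∑ i, w i * F (a i) →
      (fun x => -F x) M = ∑ i, w i * (fun x => -F x) (a i) := by
    intro F M hM
    simp only [hM, mul_neg, Finset.sum_neg_distrib]
  rcases aux_sign hf'c hf'0 with hfpos | hfneg <;>
    rcases aux_sign hg'c hg'0 with hgpos | hgneg
  · exact aux_main p q hpq f f' f'' g g' g'' hf' hf'' hf''c hfpos hg' hg'' hg''c hgpos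
      n a ha w hw hw1 Mf Mg hMf hMg hMfe hMge
  · have := aux_main p q hpq f f' f'' (fun x => -g x) (fun x => -g' x) (fun x => -g'' x)
      hf' hf'' hf''c hfpos (fun x hx => (hg' x hx).neg) (fun x hx => (hg'' x hx).neg)
      hg''c.neg (fun x hx => by simpa using (hgneg x hx))
      n a ha w hw hw1 Mf Mg hMf hMg hMfe (hneg g Mg hMge)
    simp only [neg_div_neg_eq] at this
    exact this
  · have := aux_main p q hpq (fun x => -f x) (fun x => -f' x) (fun x => -f'' x) g g' g''
      (fun x hx => (hf' x hx).neg) (fun x hx => (hf'' x hx).neg)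
      hf''c.neg (fun x hx => by simpa using (hfneg x hx)) hg' hg'' hg''c hgpos
      n a ha w hw hw1 Mf Mg hMf hMg (hneg f Mf hMfe) hMge
    rw [hoscf f' f''] at this
    simp only [neg_div_neg_eq] at this
    exact this
  · have := aux_main p q hpq (fun x => -f x) (fun x => -f' x) (fun x => -f'' x)
      (fun x => -g x) (fun x => -g' x) (fun x => -g'' x)
      (fun x hx => (hf' x hx).neg) (fun x hx => (hf'' x hx).neg)
      hf''c.neg (fun x hx => by simpa using (hfneg x hx))
      (fun x hx => (hg' x hx).neg) (fun x hx => (hg'' x hx).neg)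
      hg''c.neg (fun x hx => by simpa using (hgneg x hx))
      n a ha w hw hw1 Mf Mg hMf hMg (hneg f Mf hMfe) (hneg g Mg hMge)
    simp only [neg_div_neg_eq] at this
    exact this
end

section
/- Let U be a closed, bounded real interval, and let f, g : U → ℝ be C² functions with nowhere vanishing first derivatives. Then for any x, y ∈ U there exists ξ ∈ U such that f(y) − f(x) = (f'(x)/g'(x)) · exp(∫_x^ξ (A_f(u) − A_g(u)) du) · (g(y) − g(x)). -/
open Set intervalIntegral

lemma samesign {p q : ℝ} {h : ℝ → ℝ} (hc : ContinuousOn h (Set.Icc p q))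
    (h0 : ∀ x ∈ Set.Icc p q, h x ≠ 0) {a b : ℝ} (ha : a ∈ Set.Icc p q) (hb : b ∈ Set.Icc p q) :
    0 < h a * h b := by
  have hsub : Set.uIcc a b ⊆ Set.Icc p q := Set.uIcc_subset_Icc ha hb
  rcases (h0 a ha).lt_or_gt with hna | hpa <;> rcases (h0 b hb).lt_or_gt with hnb | hpb
  · exact mul_pos_of_neg_of_neg hna hnb
  · exfalso
    obtain ⟨c, hc1, hc0⟩ := intermediate_value_uIcc (hc.mono hsub)
      (Set.mem_uIcc.mpr (Or.inl ⟨hna.le, hpb.le⟩))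
    exact h0 c (hsub hc1) hc0
  · exfalso
    obtain ⟨c, hc1, hc0⟩ := intermediate_value_uIcc (hc.mono hsub)
      (Set.mem_uIcc.mpr (Or.inr ⟨hnb.le, hpa.le⟩))
    exact h0 c (hsub hc1) hc0
  · exact mul_pos hpa hpb

lemma logint_le {p q a b : ℝ} {f' f'' : ℝ → ℝ}
    (hf'' : ∀ x ∈ Set.Icc p q, HasDerivWithinAt f' (f'' x) (Set.Icc p q) x)
    (hf''c : ContinuousOn f'' (Set.Icc p q))
    (hf'0 : ∀ x ∈ Set.Icc p q, f' x ≠ 0)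
    (ha : a ∈ Set.Icc p q) (hb : b ∈ Set.Icc p q) (hab : a ≤ b) :
    ∫ u in a..b, f'' u / f' u = Real.log (f' b) - Real.log (f' a) := by
  have hf'c : ContinuousOn f' (Set.Icc p q) := fun u hu => (hf'' u hu).continuousWithinAt
  have hsub : Set.Icc a b ⊆ Set.Icc p q := Set.Icc_subset_Icc ha.1 hb.2
  apply intervalIntegral.integral_eq_sub_of_hasDeriv_right_of_le hab
  · exact ((hf'c.mono hsub).log fun u hu => hf'0 u (hsub hu))
  · intro u hu
    have hu' : u ∈ Set.Icc p q := hsub (Set.Ioo_subset_Icc_self hu)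
    have hnb : Set.Icc p q ∈ nhds u :=
      Icc_mem_nhds (lt_of_le_of_lt ha.1 hu.1) (lt_of_lt_of_le hu.2 hb.2)
    exact (((hf'' u hu').hasDerivAt hnb).log (hf'0 u hu')).hasDerivWithinAt
  · apply ContinuousOn.intervalIntegrable
    apply ContinuousOn.mono (hf''c.div hf'c hf'0)
    rw [Set.uIcc_of_le hab]; exact hsub

lemma logint {p q a b : ℝ} {f' f'' : ℝ → ℝ}
    (hf'' : ∀ x ∈ Set.Icc p q, HasDerivWithinAt f' (f'' x) (Set.Icc p q) x)
    (hf''c : ContinuousOn f'' (Set.Icc p q))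
    (hf'0 : ∀ x ∈ Set.Icc p q, f' x ≠ 0)
    (ha : a ∈ Set.Icc p q) (hb : b ∈ Set.Icc p q) :
    ∫ u in a..b, f'' u / f' u = Real.log (f' b) - Real.log (f' a) := by
  rcases le_total a b with hab | hab
  · exact logint_le hf'' hf''c hf'0 ha hb hab
  · rw [intervalIntegral.integral_symm, logint_le hf'' hf''c hf'0 hb ha hab]; ring

/-- **Mean value identity:** for `f, g` of class `C²` on `[p,q]` with nowhere vanishing first
derivatives, for any `x, y ∈ [p,q]` there is `ξ ∈ [p,q]` with
`f(y) - f(x) = (f'(x)/g'(x)) · exp(∫_x^ξ (A_f - A_g)) · (g(y) - g(x))`, `A_f = f''/f'`. -/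
theorem stmt_8 (p q : ℝ) (hpq : p ≤ q)
    (f f' f'' g g' g'' : ℝ → ℝ)
    (hf' : ∀ x ∈ Set.Icc p q, HasDerivWithinAt f (f' x) (Set.Icc p q) x)
    (hf'' : ∀ x ∈ Set.Icc p q, HasDerivWithinAt f' (f'' x) (Set.Icc p q) x)
    (hf''c : ContinuousOn f'' (Set.Icc p q))
    (hf'0 : ∀ x ∈ Set.Icc p q, f' x ≠ 0)
    (hg' : ∀ x ∈ Set.Icc p q, HasDerivWithinAt g (g' x) (Set.Icc p q) x)
    (hg'' : ∀ x ∈ Set.Icc p q, HasDerivWithinAt g' (g'' x) (Set.Icc p q) x)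
    (hg''c : ContinuousOn g'' (Set.Icc p q))
    (hg'0 : ∀ x ∈ Set.Icc p q, g' x ≠ 0)
    (x y : ℝ) (hx : x ∈ Set.Icc p q) (hy : y ∈ Set.Icc p q) :
    ∃ ξ ∈ Set.Icc p q,
      f y - f x = (f' x / g' x) *
        Real.exp (∫ u in x..ξ, (f'' u / f' u - g'' u / g' u)) * (g y - g x) := by
  have hf'c : ContinuousOn f' (Set.Icc p q) := fun u hu => (hf'' u hu).continuousWithinAt
  have hg'c : ContinuousOn g' (Set.Icc p q) := fun u hu => (hg'' u hu).continuousWithinAt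
  -- trivial case x = y
  rcases eq_or_ne x y with rfl | hxy
  · exact ⟨x, hx, by simp⟩
  -- Cauchy MVT gives c with (g y - g x) * f' c = (f y - f x) * g' c
  obtain ⟨c, hc, hcmvt⟩ : ∃ c ∈ Set.Icc p q, (g y - g x) * f' c = (f y - f x) * g' c := by
    rcases hxy.lt_or_gt with hlt | hlt
    · have hsub : Set.Icc x y ⊆ Set.Icc p q := Set.Icc_subset_Icc hx.1 hy.2
      have hder : ∀ u ∈ Set.Ioo x y, Set.Icc p q ∈ nhds u := fun u hu =>
        Icc_mem_nhds (lt_of_le_of_lt hx.1 hu.1) (lt_of_lt_of_le hu.2 hy.2)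
      obtain ⟨c, hc, h⟩ := exists_ratio_hasDerivAt_eq_ratio_slope f f' hlt
        (fun u hu => (hf' u (hsub hu)).continuousWithinAt.mono hsub)
        (fun u hu => (hf' u (hsub (Set.Ioo_subset_Icc_self hu))).hasDerivAt (hder u hu))
        g g'
        (fun u hu => (hg' u (hsub hu)).continuousWithinAt.mono hsub)
        (fun u hu => (hg' u (hsub (Set.Ioo_subset_Icc_self hu))).hasDerivAt (hder u hu))
      exact ⟨c, hsub (Set.Ioo_subset_Icc_self hc), h⟩
    · have hsub : Set.Icc y x ⊆ Set.Icc p q := Set.Icc_subset_Icc hy.1 hx.2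
      have hder : ∀ u ∈ Set.Ioo y x, Set.Icc p q ∈ nhds u := fun u hu =>
        Icc_mem_nhds (lt_of_le_of_lt hy.1 hu.1) (lt_of_lt_of_le hu.2 hx.2)
      obtain ⟨c, hc, h⟩ := exists_ratio_hasDerivAt_eq_ratio_slope f f' hlt
        (fun u hu => (hf' u (hsub hu)).continuousWithinAt.mono hsub)
        (fun u hu => (hf' u (hsub (Set.Ioo_subset_Icc_self hu))).hasDerivAt (hder u hu))
        g g'
        (fun u hu => (hg' u (hsub hu)).continuousWithinAt.mono hsub)
        (fun u hu => (hg' u (hsub (Set.Ioo_subset_Icc_self hu))).hasDerivAt (hder u hu))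
      refine ⟨c, hsub (Set.Ioo_subset_Icc_self hc), by linarith⟩
  refine ⟨c, hc, ?_⟩
  -- split the integral
  have hintf : IntervalIntegrable (fun u => f'' u / f' u) MeasureTheory.volume x c :=
    (hf''c.div hf'c hf'0).mono (Set.uIcc_subset_Icc hx hc) |>.intervalIntegrable
  have hintg : IntervalIntegrable (fun u => g'' u / g' u) MeasureTheory.volume x c :=
    (hg''c.div hg'c hg'0).mono (Set.uIcc_subset_Icc hx hc) |>.intervalIntegrable
  have hsplit : (∫ u in x..c, (f'' u / f' u - g'' u / g' u)) =
      (∫ u in x..c, f'' u / f' u) - ∫ u in x..c, g'' u / g' u :=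
    intervalIntegral.integral_sub hintf hintg
  rw [hsplit, logint hf'' hf''c hf'0 hx hc, logint hg'' hg''c hg'0 hx hc]
  -- sign facts
  have hfp : 0 < f' c / f' x := by
    have := samesign hf'c hf'0 hx hc
    rcases mul_pos_iff.mp this with ⟨h1, h2⟩ | ⟨h1, h2⟩
    · exact div_pos h2 h1
    · exact div_pos_of_neg_of_neg h2 h1
  have hgp : 0 < g' c / g' x := by
    have := samesign hg'c hg'0 hx hc
    rcases mul_pos_iff.mp this with ⟨h1, h2⟩ | ⟨h1, h2⟩
    · exact div_pos h2 h1
    · exact div_pos_of_neg_of_neg h2 h1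
  have hexp : Real.exp (Real.log (f' c) - Real.log (f' x) -
      (Real.log (g' c) - Real.log (g' x))) = (f' c / f' x) / (g' c / g' x) := by
    rw [← Real.log_div (hf'0 c hc) (hf'0 x hx), ← Real.log_div (hg'0 c hc) (hg'0 x hx),
      Real.exp_sub, Real.exp_log hfp, Real.exp_log hgp]
  rw [hexp]
  have h1 := hf'0 x hx
  have h2 := hg'0 x hx
  have h3 := hf'0 c hc
  have h4 := hg'0 c hc
  have hcoef : f' x / g' x * (f' c / f' x / (g' c / g' x)) = f' c / g' c := by
    field_simp
  rw [hcoef]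
  have hgc := hg'0 c hc
  field_simp
  linarith [hcmvt]
end

section
/- Let U be a closed, bounded real interval, and let f, g : U → ℝ be C² functions with nowhere vanishing first derivatives. Then for all (x,y,z) ∈ U³ with x ≠ z: exp(−‖A_f − A_g‖_*) · |B_g(x,y,z)| ≤ |B_f(x,y,z)| ≤ exp(‖A_f − A_g‖_*) · |B_g(x,y,z)|. -/
private lemma cauchy_lt (p q a b : ℝ) (f f' g g' : ℝ → ℝ)
    (hf' : ∀ x ∈ Set.Icc p q, HasDerivWithinAt f (f' x) (Set.Icc p q) x)
    (hg' : ∀ x ∈ Set.Icc p q, HasDerivWithinAt g (g' x) (Set.Icc p q) x)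
    (hg'0 : ∀ x ∈ Set.Icc p q, g' x ≠ 0)
    (ha : a ∈ Set.Icc p q) (hb : b ∈ Set.Icc p q) (hab : a < b) :
    ∃ ξ ∈ Set.Icc p q, g b - g a ≠ 0 ∧ f b - f a = (f' ξ / g' ξ) * (g b - g a) := by
  have hsub : Set.Icc a b ⊆ Set.Icc p q := Set.Icc_subset_Icc ha.1 hb.2
  have hmem : ∀ t ∈ Set.Ioo a b, t ∈ Set.Icc p q ∧ Set.Icc p q ∈ nhds t := by
    intro t ht
    have h1 : p < t := lt_of_le_of_lt ha.1 ht.1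
    have h2 : t < q := lt_of_lt_of_le ht.2 hb.2
    exact ⟨⟨h1.le, h2.le⟩, Icc_mem_nhds h1 h2⟩
  have contF : ContinuousOn f (Set.Icc a b) :=
    fun t ht => ((hf' t (hsub ht)).continuousWithinAt).mono hsub
  have contG : ContinuousOn g (Set.Icc a b) :=
    fun t ht => ((hg' t (hsub ht)).continuousWithinAt).mono hsub
  have derF : ∀ t ∈ Set.Ioo a b, HasDerivAt f (f' t) t :=
    fun t ht => (hf' t (hmem t ht).1).hasDerivAt (hmem t ht).2
  have derG : ∀ t ∈ Set.Ioo a b, HasDerivAt g (g' t) t :=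
    fun t ht => (hg' t (hmem t ht).1).hasDerivAt (hmem t ht).2
  have hgab : g b - g a ≠ 0 := by
    intro he
    obtain ⟨c, hc, hceq⟩ := exists_hasDerivAt_eq_slope g g' hab contG derG
    have : g' c = 0 := by rw [hceq, he, zero_div]
    exact hg'0 c (hmem c hc).1 this
  obtain ⟨ξ, hξ, heq⟩ := exists_ratio_hasDerivAt_eq_ratio_slope f f' hab contF derF g g' contG derG
  refine ⟨ξ, (hmem ξ hξ).1, hgab, ?_⟩
  have hgξ : g' ξ ≠ 0 := hg'0 ξ (hmem ξ hξ).1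
  field_simp
  linarith [heq]

private lemma cauchy_ne (p q a b : ℝ) (f f' g g' : ℝ → ℝ)
    (hf' : ∀ x ∈ Set.Icc p q, HasDerivWithinAt f (f' x) (Set.Icc p q) x)
    (hg' : ∀ x ∈ Set.Icc p q, HasDerivWithinAt g (g' x) (Set.Icc p q) x)
    (hg'0 : ∀ x ∈ Set.Icc p q, g' x ≠ 0)
    (ha : a ∈ Set.Icc p q) (hb : b ∈ Set.Icc p q) (hab : a ≠ b) :
    ∃ ξ ∈ Set.Icc p q, g a - g b ≠ 0 ∧ f a - f b = (f' ξ / g' ξ) * (g a - g b) := by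
  rcases hab.lt_or_gt with h | h
  · obtain ⟨ξ, hξ, h1, h2⟩ := cauchy_lt p q a b f f' g g' hf' hg' hg'0 ha hb h
    exact ⟨ξ, hξ, fun he => h1 (by linarith), by linear_combination -h2⟩
  · obtain ⟨ξ, hξ, h1, h2⟩ := cauchy_lt p q b a f f' g g' hf' hg' hg'0 hb ha h
    exact ⟨ξ, hξ, h1, h2⟩

private lemma osc_bound (p q : ℝ) (hpq : p ≤ q) (hfun D : ℝ → ℝ)
    (hder : ∀ t ∈ Set.Icc p q, HasDerivWithinAt hfun (D t) (Set.Icc p q) t)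
    (hDc : ContinuousOn D (Set.Icc p q)) :
    ∀ a ∈ Set.Icc p q, ∀ b ∈ Set.Icc p q,
      hfun a - hfun b ≤ oscNorm (Set.Icc p q) D := by
  have hcont : ContinuousOn hfun (Set.Icc p q) := fun t ht => (hder t ht).continuousWithinAt
  -- FTC for a ≤ b
  have hftc : ∀ a ∈ Set.Icc p q, ∀ b ∈ Set.Icc p q, a ≤ b →
      (∫ t in a..b, D t) = hfun b - hfun a := by
    intro a ha b hb hab
    have hsub : Set.Icc a b ⊆ Set.Icc p q := Set.Icc_subset_Icc ha.1 hb.2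
    apply intervalIntegral.integral_eq_sub_of_hasDeriv_right_of_le hab (hcont.mono hsub)
    · intro t ht
      have h1 : p < t := lt_of_le_of_lt ha.1 ht.1
      have h2 : t < q := lt_of_lt_of_le ht.2 hb.2
      exact ((hder t ⟨h1.le, h2.le⟩).hasDerivAt (Icc_mem_nhds h1 h2)).hasDerivWithinAt
    · exact (hDc.mono (by rw [Set.uIcc_of_le hab]; exact hsub)).intervalIntegrable
  -- boundedness of the family
  obtain ⟨C, hC⟩ := IsCompact.exists_bound_of_continuousOn isCompact_Icc hDc
  have hC0 : 0 ≤ C := le_trans (norm_nonneg _) (hC p ⟨le_refl p, hpq⟩)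
  have hbdd : BddAbove (Set.range fun r : Set.Icc p q × Set.Icc p q =>
      |∫ x in (r.1 : ℝ)..(r.2 : ℝ), D x|) := by
    refine ⟨C * (q - p), ?_⟩
    rintro _ ⟨⟨⟨a, ha⟩, ⟨b, hb⟩⟩, rfl⟩
    have h1 : ‖∫ x in a..b, D x‖ ≤ C * |b - a| := by
      apply intervalIntegral.norm_integral_le_of_norm_le_const
      intro t ht
      have : t ∈ Set.Icc p q := by
        rcases le_total a b with h | h
        · rw [Set.uIoc_of_le h] at ht
          exact ⟨le_trans ha.1 ht.1.le, le_trans ht.2 hb.2⟩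
        · rw [Set.uIoc_of_ge h] at ht
          exact ⟨le_trans hb.1 ht.1.le, le_trans ht.2 ha.2⟩
      exact hC t this
    have h2 : |b - a| ≤ q - p := by
      rw [abs_sub_le_iff]; constructor <;> [linarith [ha.1, ha.2, hb.1, hb.2]; linarith [ha.1, ha.2, hb.1, hb.2]]
    simp only []
    calc |∫ x in a..b, D x| ≤ C * |b - a| := h1
      _ ≤ C * (q - p) := by nlinarith
  intro a ha b hb
  have key : hfun a - hfun b ≤ |∫ t in b..a, D t| := by
    rcases le_total b a with h | h
    · rw [hftc b hb a ha h]; exact le_abs_self _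
    · have := hftc a ha b hb h
      rw [intervalIntegral.integral_symm] at this
      have : (∫ t in b..a, D t) = hfun a - hfun b := by linarith [this]
      rw [this]; exact le_abs_self _
  refine le_trans key (le_ciSup hbdd (⟨⟨b, hb⟩, ⟨a, ha⟩⟩ : Set.Icc p q × Set.Icc p q))

/-- For `f, g` of class `C²` on `[p,q]` with nowhere vanishing first derivatives:
`exp(-‖A_f - A_g‖_*)·|B_g(x,y,z)| ≤ |B_f(x,y,z)| ≤ exp(‖A_f - A_g‖_*)·|B_g(x,y,z)|`. -/
theorem stmt_9 (p q : ℝ) (hpq : p ≤ q)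
    (f f' f'' g g' g'' : ℝ → ℝ)
    (hf' : ∀ x ∈ Set.Icc p q, HasDerivWithinAt f (f' x) (Set.Icc p q) x)
    (hf'' : ∀ x ∈ Set.Icc p q, HasDerivWithinAt f' (f'' x) (Set.Icc p q) x)
    (hf''c : ContinuousOn f'' (Set.Icc p q))
    (hf'0 : ∀ x ∈ Set.Icc p q, f' x ≠ 0)
    (hg' : ∀ x ∈ Set.Icc p q, HasDerivWithinAt g (g' x) (Set.Icc p q) x)
    (hg'' : ∀ x ∈ Set.Icc p q, HasDerivWithinAt g' (g'' x) (Set.Icc p q) x)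
    (hg''c : ContinuousOn g'' (Set.Icc p q))
    (hg'0 : ∀ x ∈ Set.Icc p q, g' x ≠ 0)
    (x y z : ℝ) (hx : x ∈ Set.Icc p q) (hy : y ∈ Set.Icc p q) (hz : z ∈ Set.Icc p q)
    (hxz : x ≠ z) :
    Real.exp (-(oscNorm (Set.Icc p q) (fun u => f'' u / f' u - g'' u / g' u))) *
        |(g x - g y) / (g x - g z)| ≤ |(f x - f y) / (f x - f z)| ∧
    |(f x - f y) / (f x - f z)| ≤
      Real.exp (oscNorm (Set.Icc p q) (fun u => f'' u / f' u - g'' u / g' u)) *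
        |(g x - g y) / (g x - g z)| := by
  set D : ℝ → ℝ := fun u => f'' u / f' u - g'' u / g' u with hD
  set N : ℝ := oscNorm (Set.Icc p q) D with hNdef
  set hfun : ℝ → ℝ := fun u => Real.log (f' u) - Real.log (g' u) with hfundef
  -- derivative of hfun
  have hder : ∀ t ∈ Set.Icc p q, HasDerivWithinAt hfun (D t) (Set.Icc p q) t := by
    intro t ht
    exact ((hf'' t ht).log (hf'0 t ht)).sub ((hg'' t ht).log (hg'0 t ht))
  -- continuity of D
  have hf'c : ContinuousOn f' (Set.Icc p q) := fun t ht => (hf'' t ht).continuousWithinAt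
  have hg'c : ContinuousOn g' (Set.Icc p q) := fun t ht => (hg'' t ht).continuousWithinAt
  have hDc : ContinuousOn D (Set.Icc p q) :=
    (hf''c.div hf'c hf'0).sub (hg''c.div hg'c hg'0)
  have hN : ∀ a ∈ Set.Icc p q, ∀ b ∈ Set.Icc p q, hfun a - hfun b ≤ N :=
    osc_bound p q hpq hfun D hder hDc
  have hexp : ∀ t ∈ Set.Icc p q, |f' t / g' t| = Real.exp (hfun t) := by
    intro t ht
    rw [hfundef, Real.exp_sub, Real.exp_log_eq_abs (hf'0 t ht),
      Real.exp_log_eq_abs (hg'0 t ht), abs_div]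
  obtain ⟨η, hη, hgxz, hfxz⟩ := cauchy_ne p q x z f f' g g' hf' hg' hg'0 hx hz hxz
  have hfgη : f' η / g' η ≠ 0 := div_ne_zero (hf'0 η hη) (hg'0 η hη)
  have hfxz0 : f x - f z ≠ 0 := by rw [hfxz]; exact mul_ne_zero hfgη hgxz
  by_cases hxy : x = y
  · rw [hxy]
    simp [sub_self]
  obtain ⟨ξ, hξ, hgxy, hfxy⟩ := cauchy_ne p q x y f f' g g' hf' hg' hg'0 hx hy hxy
  have key : |(f x - f y) / (f x - f z)| =
      Real.exp (hfun ξ - hfun η) * |(g x - g y) / (g x - g z)| := by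
    have he : Real.exp (hfun ξ - hfun η) = Real.exp (hfun ξ) / Real.exp (hfun η) :=
      Real.exp_sub _ _
    rw [abs_div, hfxy, hfxz, abs_mul, abs_mul, hexp ξ hξ, hexp η hη, he, abs_div,
      div_mul_div_comm]
  rw [key]
  constructor
  · apply mul_le_mul_of_nonneg_right _ (abs_nonneg _)
    rw [Real.exp_le_exp]
    linarith [hN η hη ξ hξ]
  · apply mul_le_mul_of_nonneg_right _ (abs_nonneg _)
    rw [Real.exp_le_exp]
    exact hN ξ hξ η hη
end

section
/- Let U be a closed, bounded real interval with length |U|, and let f : U → ℝ be a C² function with nowhere vanishing first derivative. Then for all (x,y,z) ∈ U³ with x ≠ z: |B_f(x,y,z)| ≤ (|U| / |x − z|) · exp(‖A_f‖_*). -/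
/-- Mean value theorem on a subinterval of `[p,q]`. -/
lemma mvt_aux (p q : ℝ) (f f' : ℝ → ℝ)
    (hf' : ∀ x ∈ Set.Icc p q, HasDerivWithinAt f (f' x) (Set.Icc p q) x)
    (a b : ℝ) (ha : a ∈ Set.Icc p q) (hb : b ∈ Set.Icc p q) (hab : a < b) :
    ∃ c ∈ Set.Icc p q, f b - f a = f' c * (b - a) := by
  have hsub : Set.Icc a b ⊆ Set.Icc p q := Set.Icc_subset_Icc ha.1 hb.2
  have hcont : ContinuousOn f (Set.Icc a b) :=
    fun u hu => ((hf' u (hsub hu)).continuousWithinAt).mono hsub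
  have hderiv : ∀ u ∈ Set.Ioo a b, HasDerivAt f (f' u) u := by
    intro u hu
    have hmem : Set.Icc p q ∈ nhds u :=
      Icc_mem_nhds (lt_of_le_of_lt ha.1 hu.1) (lt_of_lt_of_le hu.2 hb.2)
    exact (hf' u (hsub ⟨hu.1.le, hu.2.le⟩)).hasDerivAt hmem
  obtain ⟨c, hc, hceq⟩ := exists_hasDerivAt_eq_slope f f' hab hcont hderiv
  refine ⟨c, hsub ⟨hc.1.le, hc.2.le⟩, ?_⟩
  rw [eq_div_iff (by linarith : b - a ≠ 0)] at hceq
  exact hceq.symm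

/-- MVT, both orders. -/
lemma mvt_aux' (p q : ℝ) (f f' : ℝ → ℝ)
    (hf' : ∀ x ∈ Set.Icc p q, HasDerivWithinAt f (f' x) (Set.Icc p q) x)
    (a b : ℝ) (ha : a ∈ Set.Icc p q) (hb : b ∈ Set.Icc p q) (hab : a ≠ b) :
    ∃ c ∈ Set.Icc p q, f b - f a = f' c * (b - a) := by
  rcases lt_or_gt_of_ne hab with h | h
  · exact mvt_aux p q f f' hf' a b ha hb h
  · obtain ⟨c, hc, hceq⟩ := mvt_aux p q f f' hf' b a hb ha h
    exact ⟨c, hc, by linarith [hceq]⟩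

/-- FTC for `log ∘ f'`. -/
lemma ftc_aux (p q : ℝ) (f' f'' : ℝ → ℝ)
    (hf'' : ∀ x ∈ Set.Icc p q, HasDerivWithinAt f' (f'' x) (Set.Icc p q) x)
    (hf'0 : ∀ x ∈ Set.Icc p q, f' x ≠ 0)
    (hgc : ContinuousOn (fun u => f'' u / f' u) (Set.Icc p q))
    (a b : ℝ) (ha : a ∈ Set.Icc p q) (hb : b ∈ Set.Icc p q) (hab : a ≤ b) :
    ∫ u in a..b, f'' u / f' u = Real.log (f' b) - Real.log (f' a) := by
  have hsub : Set.Icc a b ⊆ Set.Icc p q := Set.Icc_subset_Icc ha.1 hb.2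
  have hf'c : ContinuousOn f' (Set.Icc a b) :=
    fun u hu => ((hf'' u (hsub hu)).continuousWithinAt).mono hsub
  refine intervalIntegral.integral_eq_sub_of_hasDeriv_right_of_le
    (f := fun u => Real.log (f' u)) (f' := fun u => f'' u / f' u) hab ?_ ?_ ?_
  · exact Real.continuousOn_log.comp hf'c
      (fun u hu => Set.mem_compl_singleton_iff.mpr (hf'0 u (hsub hu)))
  · intro u hu
    have hmem : Set.Icc p q ∈ nhds u :=
      Icc_mem_nhds (lt_of_le_of_lt ha.1 hu.1) (lt_of_lt_of_le hu.2 hb.2)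
    have huI : u ∈ Set.Icc p q := hsub ⟨hu.1.le, hu.2.le⟩
    exact (((hf'' u huI).hasDerivAt hmem).log (hf'0 u huI)).hasDerivWithinAt
  · apply ContinuousOn.intervalIntegrable
    apply hgc.mono
    rw [Set.uIcc_of_le hab]
    exact hsub

/-- For `f` of class `C²` on `[p,q]` with nowhere vanishing first derivative,
`|B_f(x,y,z)| ≤ (|U|/|x-z|)·exp(‖A_f‖_*)`. -/
theorem stmt_12 (p q : ℝ) (hpq : p ≤ q)
    (f f' f'' : ℝ → ℝ)
    (hf' : ∀ x ∈ Set.Icc p q, HasDerivWithinAt f (f' x) (Set.Icc p q) x)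
    (hf'' : ∀ x ∈ Set.Icc p q, HasDerivWithinAt f' (f'' x) (Set.Icc p q) x)
    (hf''c : ContinuousOn f'' (Set.Icc p q))
    (hf'0 : ∀ x ∈ Set.Icc p q, f' x ≠ 0)
    (x y z : ℝ) (hx : x ∈ Set.Icc p q) (hy : y ∈ Set.Icc p q) (hz : z ∈ Set.Icc p q)
    (hxz : x ≠ z) :
    |(f x - f y) / (f x - f z)| ≤
      ((q - p) / |x - z|) * Real.exp (oscNorm (Set.Icc p q) (fun u => f'' u / f' u)) := by
  set U := Set.Icc p q with hU
  set g : ℝ → ℝ := fun u => f'' u / f' u with hgdef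
  have hf'c : ContinuousOn f' U := fun u hu => (hf'' u hu).continuousWithinAt
  have hgc : ContinuousOn g U := hf''c.div hf'c hf'0
  -- RHS is nonneg
  have hRHS0 : 0 ≤ ((q - p) / |x - z|) * Real.exp (oscNorm U g) :=
    mul_nonneg (div_nonneg (by linarith) (abs_nonneg _)) (Real.exp_pos _).le
  by_cases hxy : y = x
  · subst hxy
    simp [hRHS0]
  -- oscNorm bounds the integrals
  have hbdd : BddAbove (Set.range fun pr : U × U => |∫ u in (pr.1 : ℝ)..(pr.2 : ℝ), g u|) := by
    obtain ⟨C, hC⟩ := (isCompact_Icc).exists_bound_of_continuousOn hgc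
    refine ⟨C * (q - p), ?_⟩
    rintro _ ⟨⟨⟨a, haU⟩, ⟨b, hbU⟩⟩, rfl⟩
    simp only
    have hsubI : Set.uIoc a b ⊆ U := by
      refine subset_trans Set.Ioc_subset_Icc_self ?_
      rw [hU, ← Set.uIcc_of_le hpq]
      exact Set.uIcc_subset_uIcc (by rwa [Set.uIcc_of_le hpq]) (by rwa [Set.uIcc_of_le hpq])
    have h1 : |∫ u in a..b, g u| ≤ C * |b - a| :=
      intervalIntegral.norm_integral_le_of_norm_le_const (fun u hu => hC u (hsubI hu))
    refine h1.trans ?_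
    have hC0 : 0 ≤ C := le_trans (norm_nonneg _) (hC p ⟨le_refl p, hpq⟩)
    have : |b - a| ≤ q - p := by
      rw [abs_sub_le_iff]
      constructor <;> [linarith [haU.1, haU.2, hbU.1, hbU.2]; linarith [haU.1, haU.2, hbU.1, hbU.2]]
    exact mul_le_mul_of_nonneg_left this hC0
  have hint_le : ∀ (a : ℝ) (haU : a ∈ U) (b : ℝ) (hbU : b ∈ U),
      (∫ u in a..b, g u) ≤ oscNorm U g := by
    intro a haU b hbU
    refine le_trans (le_abs_self _) ?_
    exact le_ciSup hbdd (⟨⟨a, haU⟩, ⟨b, hbU⟩⟩ : U × U)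
  -- integral equals difference of logs (both orders)
  have hftc : ∀ (a : ℝ) (haU : a ∈ U) (b : ℝ) (hbU : b ∈ U),
      (∫ u in a..b, g u) = Real.log (f' b) - Real.log (f' a) := by
    intro a haU b hbU
    rcases le_total a b with h | h
    · exact ftc_aux p q f' f'' hf'' hf'0 hgc a b haU hbU h
    · rw [intervalIntegral.integral_symm,
        ftc_aux p q f' f'' hf'' hf'0 hgc b a hbU haU h]
      ring
  -- MVT applications
  obtain ⟨ξ, hξU, hξ⟩ := mvt_aux' p q f f' hf' y x hy hx hxy
  obtain ⟨η, hηU, hη⟩ := mvt_aux' p q f f' hf' z x hz hx (Ne.symm hxz)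
  -- ratio of derivatives bounded by exp of oscNorm
  have hratio : |f' ξ| / |f' η| ≤ Real.exp (oscNorm U g) := by
    have key : |f' ξ| / |f' η| = Real.exp (∫ u in η..ξ, g u) := by
      rw [hftc η hηU ξ hξU, Real.exp_sub, Real.exp_log_eq_abs (hf'0 ξ hξU),
        Real.exp_log_eq_abs (hf'0 η hηU)]
    rw [key]
    exact Real.exp_le_exp.mpr (hint_le η hηU ξ hξU)
  have hxz' : x - z ≠ 0 := sub_ne_zero.mpr hxz
  have hη0 : f' η ≠ 0 := hf'0 η hηU
  rw [hξ, hη, abs_div, abs_mul, abs_mul]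
  have hηpos : 0 < |f' η| := abs_pos.mpr hη0
  have hxzpos : 0 < |x - z| := abs_pos.mpr hxz'
  rw [div_le_iff₀ (mul_pos hηpos hxzpos)]
  have hxyle : |x - y| ≤ q - p := by
    rw [abs_sub_le_iff]
    constructor <;> linarith [hx.1, hx.2, hy.1, hy.2]
  have hr' : |f' ξ| ≤ Real.exp (oscNorm U g) * |f' η| := by
    rw [div_le_iff₀ hηpos] at hratio
    exact hratio
  have hxzne : |x - z| ≠ 0 := ne_of_gt hxzpos
  calc |f' ξ| * |x - y| ≤ (Real.exp (oscNorm U g) * |f' η|) * (q - p) := by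
        apply mul_le_mul hr' hxyle (abs_nonneg _)
        positivity
    _ = (q - p) / |x - z| * Real.exp (oscNorm U g) * (|f' η| * |x - z|) := by
        field_simp
end

section
/- Let U = [0, 2π] and for an integer n ≥ 2 let f_n(x) = x + n⁻² sin(nx) and f(x) = x. Then ‖A_{f_n} − A_f‖_* = sup_{a,b ∈ [0,2π]} |∫_a^b (−n sin(nx)/(n + cos(nx))) dx| = ln((n+1)/(n−1)). -/
open Real

/-
The integrand has the antiderivative `log (n + cos (n x))`, so every integral over `[a, b]` is a
difference of two values of it, and the supremum is its oscillation on `[0, 2π]`: the maximum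
`log (n + 1)` at `x = 0` minus the minimum `log (n - 1)` at `x = π / n`.
-/

open Set

theorem oscNorm_eq_sub_of_hasDerivAt {U : Set ℝ} {F h : ℝ → ℝ} {x₀ x₁ : ℝ}
    (hF : ∀ x, HasDerivAt F (h x) x) (hh : Continuous h) (hx₀ : x₀ ∈ U) (hx₁ : x₁ ∈ U)
    (hmin : IsMinOn F U x₀) (hmax : IsMaxOn F U x₁) :
    oscNorm U h = F x₁ - F x₀ := by
  have hint : ∀ a b, ∫ x in a..b, h x = F b - F a := fun a b =>
    intervalIntegral.integral_eq_sub_of_hasDerivAt (fun x _ => hF x) (hh.intervalIntegrable a b)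
  have hle : ∀ p : U × U, |F p.2 - F p.1| ≤ F x₁ - F x₀ := by
    rintro ⟨⟨a, ha⟩, ⟨b, hb⟩⟩
    have := isMinOn_iff.1 hmin a ha
    have := isMinOn_iff.1 hmin b hb
    have := isMaxOn_iff.1 hmax a ha
    have := isMaxOn_iff.1 hmax b hb
    rw [abs_sub_le_iff]
    constructor <;> linarith
  have : Nonempty U := ⟨⟨x₀, hx₀⟩⟩
  simp only [oscNorm, hint]
  refine le_antisymm (ciSup_le hle) ?_
  calc F x₁ - F x₀ = |F x₁ - F x₀| := (abs_of_nonneg (by linarith [isMaxOn_iff.1 hmax x₀ hx₀])).symm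
    _ ≤ _ := le_ciSup ⟨_, forall_mem_range.2 hle⟩ (⟨⟨x₀, hx₀⟩, ⟨x₁, hx₁⟩⟩ : U × U)

noncomputable def mikusinski (f : ℝ → ℝ) (x : ℝ) : ℝ := deriv (deriv f) x / deriv f x

theorem mikusinski_id : mikusinski (fun x => x) = 0 := by
  funext x
  simp [mikusinski]

theorem deriv_id_add_inv_sq_mul_sin {c : ℝ} (hc : c ≠ 0) :
    deriv (fun x => x + (c ^ 2)⁻¹ * sin (c * x)) = fun x => 1 + c⁻¹ * cos (c * x) := by
  funext x
  have h := (hasDerivAt_id' x).add ((((hasDerivAt_id' x).const_mul c).sin).const_mul (c ^ 2)⁻¹)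
  refine h.deriv.trans ?_
  field_simp

theorem deriv_one_add_inv_mul_cos (c : ℝ) :
    deriv (fun x => 1 + c⁻¹ * cos (c * x)) = fun x => -(c⁻¹ * c * sin (c * x)) := by
  funext x
  have h := ((((hasDerivAt_id' x).const_mul c).cos).const_mul c⁻¹).const_add 1
  rw [h.deriv]
  ring

theorem mikusinski_id_add_inv_sq_mul_sin {c : ℝ} (hc : c ≠ 0) :
    mikusinski (fun x => x + (c ^ 2)⁻¹ * sin (c * x)) =
      fun x => -(c * sin (c * x)) / (c + cos (c * x)) := by
  funext x
  simp only [mikusinski, deriv_id_add_inv_sq_mul_sin hc, deriv_one_add_inv_mul_cos]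
  field_simp

theorem hasDerivAt_log_add_cos_mul {c : ℝ} (hc : 1 < c) (x : ℝ) :
    HasDerivAt (fun x => log (c + cos (c * x))) (-(c * sin (c * x)) / (c + cos (c * x))) x := by
  have h := ((((hasDerivAt_id' x).const_mul c).cos).const_add c).log
    (by linarith [neg_one_le_cos (c * x)])
  convert h using 1
  ring

theorem oscNorm_Icc_neg_mul_sin_div_add_cos {c : ℝ} (hc : 1 < c) :
    oscNorm (Icc 0 (2 * π)) (fun x => -(c * sin (c * x)) / (c + cos (c * x))) =
      log ((c + 1) / (c - 1)) := by
  have hpos : ∀ y, 0 < c + cos y := fun y => by linarith [neg_one_le_cos y]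
  have hπc : c * (π / c) = π := mul_div_cancel₀ π (by positivity)
  rw [oscNorm_eq_sub_of_hasDerivAt (x₀ := π / c) (x₁ := 0) (hasDerivAt_log_add_cos_mul hc)
    (by fun_prop (disch := exact fun x => (hpos _).ne'))]
  · rw [mul_zero, cos_zero, hπc, cos_pi, ← log_div (by positivity) (by linarith), sub_eq_add_neg]
  · exact ⟨by positivity, by rw [div_le_iff₀ (by positivity)]; nlinarith [pi_pos]⟩
  · exact ⟨le_rfl, by positivity⟩
  · refine fun x _ => log_le_log (hpos _) ?_
    rw [hπc, cos_pi]
    linarith [neg_one_le_cos (c * x)]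
  · refine fun x _ => log_le_log (hpos _) ?_
    rw [mul_zero, cos_zero]
    linarith [cos_le_one (c * x)]

/-- **Example 2 (oscillation norm computation):** for `f_n(x) = x + n⁻² sin(nx)` and
`f(x) = x` on `[0,2π]`,
`‖A_{f_n} - A_f‖_* = sup_{a,b} |∫_a^b (-n sin(nx)/(n + cos(nx))) dx| = ln((n+1)/(n-1))`. -/
theorem stmt_16 (n : ℕ) (hn : 2 ≤ n) :
    oscNorm (Set.Icc (0 : ℝ) (2 * π))
        (fun x => deriv (deriv (fun x : ℝ => x + ((n : ℝ) ^ 2)⁻¹ * sin (n * x))) x /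
            deriv (fun x : ℝ => x + ((n : ℝ) ^ 2)⁻¹ * sin (n * x)) x -
          deriv (deriv (fun x : ℝ => x)) x / deriv (fun x : ℝ => x) x) =
      oscNorm (Set.Icc (0 : ℝ) (2 * π))
        (fun x => -((n : ℝ) * sin (n * x)) / ((n : ℝ) + cos (n * x))) ∧
    oscNorm (Set.Icc (0 : ℝ) (2 * π))
        (fun x => -((n : ℝ) * sin (n * x)) / ((n : ℝ) + cos (n * x))) =
      log (((n : ℝ) + 1) / ((n : ℝ) - 1)) := by
  have hn₁ : (1 : ℝ) < n := by exact_mod_cast hn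
  refine ⟨?_, oscNorm_Icc_neg_mul_sin_div_add_cos hn₁⟩
  change oscNorm _ (fun x => mikusinski _ x - mikusinski _ x) = _
  rw [mikusinski_id_add_inv_sq_mul_sin (by positivity), mikusinski_id]
  simp only [Pi.zero_apply, sub_zero]
end

section
/- Let U = [0, 2π] and for an integer n ≥ 2 let f_n(x) = x + n⁻² sin(nx) and f(x) = x. Then for every m, every a ∈ Uᵐ and every weight vector w (with w_i > 0, ∑ w_i = 1), |M_{f_n}(a,w) − M_f(a,w)| ≤ 4π/(n−1). -/
open Real

/-- **Example 2 (mean estimate via Theorem 2):** for `f_n(x) = x + n⁻² sin(nx)` and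
`f(x) = x` on `[0,2π]`, the quasi-arithmetic means satisfy
`|M_{f_n}(a,w) - M_f(a,w)| ≤ 4π/(n-1)`. Note `M_f(a,w) = ∑ wᵢ aᵢ`. -/
theorem stmt_17 (n : ℕ) (hn : 2 ≤ n)
    (m : ℕ) (a : Fin m → ℝ) (ha : ∀ i, a i ∈ Set.Icc (0 : ℝ) (2 * π))
    (w : Fin m → ℝ) (hw : ∀ i, 0 < w i) (hw1 : ∑ i, w i = 1)
    (M : ℝ) (hM : M ∈ Set.Icc (0 : ℝ) (2 * π))
    (hMe : M + ((n : ℝ) ^ 2)⁻¹ * sin (n * M) =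
      ∑ i, w i * (a i + ((n : ℝ) ^ 2)⁻¹ * sin (n * a i))) :
    |M - ∑ i, w i * a i| ≤ 4 * π / ((n : ℝ) - 1) := by
  have hn2 : (2 : ℝ) ≤ (n : ℝ) := by exact_mod_cast hn
  have hs : ∑ i, w i * (a i + ((n : ℝ) ^ 2)⁻¹ * sin (n * a i))
      = ∑ i, w i * a i + ((n : ℝ) ^ 2)⁻¹ * ∑ i, w i * sin (n * a i) := by
    rw [Finset.mul_sum, ← Finset.sum_add_distrib]
    exact Finset.sum_congr rfl fun i _ => by ring
  rw [hs] at hMe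
  have key : M - ∑ i, w i * a i
      = ((n : ℝ) ^ 2)⁻¹ * ((∑ i, w i * sin (n * a i)) - sin (n * M)) := by
    linear_combination hMe
  have hT : |∑ i, w i * sin (n * a i)| ≤ 1 := by
    calc |∑ i, w i * sin (n * a i)| ≤ ∑ i, |w i * sin (n * a i)| :=
          Finset.abs_sum_le_sum_abs _ _
      _ ≤ ∑ i, w i := Finset.sum_le_sum fun i _ => by
          rw [abs_mul, abs_of_pos (hw i)]
          exact mul_le_of_le_one_right (le_of_lt (hw i))
            (abs_le.mpr ⟨neg_one_le_sin _, sin_le_one _⟩)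
      _ = 1 := hw1
  have hsM : |sin ((n : ℝ) * M)| ≤ 1 := abs_le.mpr ⟨neg_one_le_sin _, sin_le_one _⟩
  have hc : (0 : ℝ) < (n : ℝ) ^ 2 := by positivity
  have h1 : |M - ∑ i, w i * a i| ≤ ((n : ℝ) ^ 2)⁻¹ * 2 := by
    rw [key, abs_mul, abs_of_pos (inv_pos.mpr hc)]
    have : |(∑ i, w i * sin (n * a i)) - sin (n * M)| ≤ 2 := by
      calc |(∑ i, w i * sin (n * a i)) - sin (n * M)|
          ≤ |∑ i, w i * sin (n * a i)| + |sin (n * M)| := abs_sub _ _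
        _ ≤ 2 := by linarith
    exact mul_le_mul_of_nonneg_left this (le_of_lt (inv_pos.mpr hc))
  have h2 : ((n : ℝ) ^ 2)⁻¹ * 2 ≤ 4 * π / ((n : ℝ) - 1) := by
    rw [inv_mul_eq_div, div_le_div_iff₀ hc (by linarith)]
    nlinarith [Real.pi_gt_three, sq_nonneg ((n : ℝ) - 2)]
  linarith
end

section
/- Let U be a real interval, g : U → ℝ continuous and strictly monotone, and f : U → ℝ a C¹ function with inf_U |f'| > 0. Then for every n, every a ∈ Uⁿ and every weight vector w (with w_i > 0, ∑ w_i = 1), |M_f(a,w) − M_g(a,w)| ≤ 2‖f − g‖_∞ / inf_U |f'|. -/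
/-- **Cargo–Shisha estimate:** for `g` continuous strictly monotone and `f` of class `C¹`
with `inf_U |f'| > 0`, `|M_f(a,w) - M_g(a,w)| ≤ 2‖f - g‖_∞ / inf_U |f'|`. -/
theorem stmt_19 (U : Set ℝ) (hU : U.OrdConnected)
    (g : ℝ → ℝ) (hgc : ContinuousOn g U) (hgm : StrictMonoOn g U ∨ StrictAntiOn g U)
    (f f' : ℝ → ℝ)
    (hf' : ∀ x ∈ U, HasDerivWithinAt f (f' x) U x)
    (hf'c : ContinuousOn f' U)
    (hinf : 0 < ⨅ x : U, |f' (x : ℝ)|)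
    (hbdd : BddAbove (Set.range fun x : U => |f (x : ℝ) - g (x : ℝ)|))
    (n : ℕ) (a : Fin n → ℝ) (ha : ∀ i, a i ∈ U)
    (w : Fin n → ℝ) (hw : ∀ i, 0 < w i) (hw1 : ∑ i, w i = 1)
    (Mf Mg : ℝ) (hMf : Mf ∈ U) (hMg : Mg ∈ U)
    (hMfe : f Mf = ∑ i, w i * f (a i))
    (hMge : g Mg = ∑ i, w i * g (a i)) :
    |Mf - Mg| ≤ 2 * (⨆ x : U, |f (x : ℝ) - g (x : ℝ)|) / ⨅ x : U, |f' (x : ℝ)| := by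
  set m := ⨅ x : U, |f' (x : ℝ)| with hm_def
  set ε := ⨆ x : U, |f (x : ℝ) - g (x : ℝ)| with hε_def
  have hεx : ∀ x ∈ U, |f x - g x| ≤ ε := fun x hx =>
    le_ciSup hbdd (⟨x, hx⟩ : U)
  have hmx : ∀ x ∈ U, m ≤ |f' x| := fun x hx =>
    ciInf_le ⟨0, fun y hy => by obtain ⟨z, rfl⟩ := hy; exact abs_nonneg _⟩ (⟨x, hx⟩ : U)
  have hε0 : 0 ≤ ε := le_trans (abs_nonneg _) (hεx Mf hMf)
  have hkey : |f Mf - f Mg| ≤ 2 * ε := by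
    have h1 : |f Mf - g Mg| ≤ ε := by
      rw [hMfe, hMge, ← Finset.sum_sub_distrib]
      calc |∑ i, (w i * f (a i) - w i * g (a i))|
          ≤ ∑ i, |w i * f (a i) - w i * g (a i)| := Finset.abs_sum_le_sum_abs _ _
        _ ≤ ∑ i, w i * ε := by
            apply Finset.sum_le_sum
            intro i _
            rw [← mul_sub, abs_mul, abs_of_pos (hw i)]
            exact mul_le_mul_of_nonneg_left (hεx _ (ha i)) (hw i).le
        _ = ε := by rw [← Finset.sum_mul, hw1, one_mul]
    have h2 : |g Mg - f Mg| ≤ ε := by rw [abs_sub_comm]; exact hεx Mg hMg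
    calc |f Mf - f Mg| ≤ |f Mf - g Mg| + |g Mg - f Mg| := abs_sub_le _ _ _
      _ ≤ ε + ε := add_le_add h1 h2
      _ = 2 * ε := by ring
  have hmain : m * |Mf - Mg| ≤ |f Mf - f Mg| := by
    rcases eq_or_ne Mf Mg with h | h
    · simp [h]
    · set x := min Mf Mg with hx_def
      set y := max Mf Mg with hy_def
      have hxy : x < y := min_lt_max.mpr h
      have hxU : x ∈ U := by
        rcases min_choice Mf Mg with h1 | h1 <;> rw [hx_def, h1] <;> assumption
      have hyU : y ∈ U := by
        rcases max_choice Mf Mg with h1 | h1 <;> rw [hy_def, h1] <;> assumption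
      have hIcc : Set.Icc x y ⊆ U := hU.out hxU hyU
      have hIoo : Set.Ioo x y ⊆ U := fun z hz => hIcc (Set.Ioo_subset_Icc_self hz)
      have hcont : ContinuousOn f (Set.Icc x y) := fun z hz =>
        ((hf' z (hIcc hz)).continuousWithinAt).mono hIcc
      have hderiv : ∀ z ∈ Set.Ioo x y, HasDerivAt f (f' z) z := fun z hz =>
        ((hf' z (hIoo hz)).mono hIoo).hasDerivAt (Ioo_mem_nhds hz.1 hz.2)
      obtain ⟨c, hc, hcv⟩ := exists_hasDerivAt_eq_slope f f' hxy hcont hderiv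
      have hne : y - x ≠ 0 := sub_ne_zero.mpr hxy.ne'
      have heq : f y - f x = f' c * (y - x) := by
        field_simp at hcv; linarith [hcv]
      have habs : |f y - f x| = |f Mf - f Mg| := by
        rcases le_total Mf Mg with h1 | h1
        · rw [hx_def, hy_def, min_eq_left h1, max_eq_right h1, abs_sub_comm]
        · rw [hx_def, hy_def, min_eq_right h1, max_eq_left h1]
      have habs2 : |y - x| = |Mf - Mg| := by
        rcases le_total Mf Mg with h1 | h1
        · rw [hx_def, hy_def, min_eq_left h1, max_eq_right h1, abs_sub_comm]
        · rw [hx_def, hy_def, min_eq_right h1, max_eq_left h1]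
      calc m * |Mf - Mg| = m * |y - x| := by rw [habs2]
        _ ≤ |f' c| * |y - x| := by
            apply mul_le_mul_of_nonneg_right (hmx c (hIoo hc)) (abs_nonneg _)
        _ = |f y - f x| := by rw [← abs_mul, heq]
        _ = |f Mf - f Mg| := habs
  rw [le_div_iff₀ hinf]
  calc |Mf - Mg| * m ≤ |f Mf - f Mg| := by rw [mul_comm]; exact hmain
    _ ≤ 2 * ε := hkey
end
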